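/- arXiv:0903.2574 — 9 statements merged into one kernel-verified Lean document; each statement's English description precedes it below -/
import Mathlib

section
/- Let μ be a symmetric distribution on permutations of {a,b,c} (i.e., μ(-σ)=μ(σ) where -σ reverses σ) with minimal atom probability α. Then for each voter, E[x^{a>b}] = 0, and |E[x^{a>b} · x^{b>c}]| ≤ 1 - 4α. -/
open Equiv

set_option maxHeartbeats 2000000

lemma sum_perm3 (f : Equiv.Perm (Fin 3) → ℝ) :
    ∑ σ : Equiv.Perm (Fin 3), f σ =
      f 1 + f (swap 0 1) + f (swap 0 2) + f (swap 1 2)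
        + f (swap 0 1 * swap 0 2) + f (swap 0 2 * swap 0 1) := by
  have h : (Finset.univ : Finset (Equiv.Perm (Fin 3))) =
      {1, swap 0 1, swap 0 2, swap 1 2, swap 0 1 * swap 0 2, swap 0 2 * swap 0 1} := by decide
  rw [h, Finset.sum_insert (by decide), Finset.sum_insert (by decide),
    Finset.sum_insert (by decide), Finset.sum_insert (by decide),
    Finset.sum_insert (by decide), Finset.sum_singleton]
  ring

noncomputable def prefInd (a b : Fin 3) (σ : Equiv.Perm (Fin 3)) : ℝ :=
  if σ a < σ b then 1 else -1

/-- For a symmetric distribution `μ` on rankings of 3 alternatives (invariant under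
reversal) with minimal atom probability `α`: `E[x^{a>b}] = 0` and
`|E[x^{a>b} x^{b>c}]| ≤ 1 - 4α`. -/
theorem stmt_2 (μ : Equiv.Perm (Fin 3) → ℝ) (α : ℝ)
    (hnn : ∀ σ, 0 ≤ μ σ) (hsum : ∑ σ : Equiv.Perm (Fin 3), μ σ = 1)
    (hsymm : ∀ σ : Equiv.Perm (Fin 3), μ (σ.trans (Fin.revPerm)) = μ σ)
    (hα : ∀ σ, α ≤ μ σ) (hαmin : ∃ σ, μ σ = α)
    (a b c : Fin 3) (hab : a ≠ b) (hbc : b ≠ c) (hac : a ≠ c) :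
    (∑ σ : Equiv.Perm (Fin 3), μ σ * prefInd a b σ) = 0 ∧
    |∑ σ : Equiv.Perm (Fin 3), μ σ * (prefInd a b σ * prefInd b c σ)| ≤ 1 - 4 * α := by
  obtain ⟨σ₀, hσ₀⟩ := hαmin
  have hα0 : 0 ≤ α := hσ₀ ▸ hnn σ₀
  have e1 := hsymm 1
  have e2 := hsymm (swap 0 1)
  have e3 := hsymm (swap 1 2)
  rw [show (1 : Equiv.Perm (Fin 3)).trans Fin.revPerm = swap 0 2 from by decide] at e1
  rw [show (swap 0 1 : Equiv.Perm (Fin 3)).trans Fin.revPerm = swap 0 2 * swap 0 1 from by decide] at e2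
  rw [show (swap 1 2 : Equiv.Perm (Fin 3)).trans Fin.revPerm = swap 0 1 * swap 0 2 from by decide] at e3
  rw [sum_perm3] at hsum
  rw [sum_perm3, sum_perm3]
  have h1 := hα 1
  have h2 := hα (swap 0 1)
  have h3 := hα (swap 0 2)
  have h4 := hα (swap 1 2)
  have h5 := hα (swap 0 1 * swap 0 2)
  have h6 := hα (swap 0 2 * swap 0 1)
  fin_cases a <;> fin_cases b <;> fin_cases c <;>
    first
    | exact absurd rfl hab
    | exact absurd rfl hbc
    | exact absurd rfl hac
    | (simp (config := { decide := true }) only [prefInd, if_true, if_false]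
       norm_num
       constructor
       · linarith
       · rw [abs_le]; constructor <;> linarith)
end

section
/- Consider an IIA social choice function on 3 alternatives a,b,c and 2 voters, given by pairwise functions f^{a>b}, f^{b>c}, f^{c>a} : {-1,1}² → {-1,1}. If voter 1 is pivotal for f^{a>b} and voter 2 is pivotal for f^{b>c}, then there exists a profile of transitive individual rankings for which the outcome (f^{a>b}(x^{a>b}), f^{b>c}(x^{b>c}), f^{c>a}(x^{c>a})) equals (1,1,1) or (-1,-1,-1), i.e., is non-transitive. -/
/-- Voter `j` is pivotal for `f` if flipping coordinate `j` can change the value. -/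
def Pivotal {n : ℕ} (f : (Fin n → Bool) → Bool) (j : Fin n) : Prop :=
  ∃ x : Fin n → Bool,
    f (Function.update x j true) ≠ f (Function.update x j false)

/-- `x^{a>b}` vector of a profile: voter `i`'s pairwise preference of `a` over `b`. -/
def pairVec {n : ℕ} (a b : Fin 3) (σ : Fin n → Equiv.Perm (Fin 3)) : Fin n → Bool :=
  fun i => decide (σ i a < σ i b)

theorem Pivotal.exists_surjective_update {n : ℕ} {f : (Fin n → Bool) → Bool} {j : Fin n}
    (h : Pivotal f j) : ∃ x : Fin n → Bool, (fun s => f (Function.update x j s)).Surjective := by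
  obtain ⟨x, hx⟩ := h
  refine ⟨x, fun b => ?_⟩
  by_cases htrue : f (Function.update x j true) = b
  · exact ⟨true, htrue⟩
  · refine ⟨false, ?_⟩
    cases b <;> cases hf : f (Function.update x j false) <;> simp_all

lemma exists_perm_of_not_cyclic :
    ∀ u v w : Bool, ¬(u = v ∧ v = w) →
      ∃ π : Equiv.Perm (Fin 3),
        decide (π 0 < π 1) = u ∧ decide (π 1 < π 2) = v ∧ decide (π 2 < π 0) = w := by
  decide

lemma exists_profile_pairVec {n : ℕ} (p q r : Fin n → Bool)
    (hpqr : ∀ i, ¬(p i = q i ∧ q i = r i)) :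
    ∃ σ : Fin n → Equiv.Perm (Fin 3),
      pairVec 0 1 σ = p ∧ pairVec 1 2 σ = q ∧ pairVec 2 0 σ = r := by
  choose σ hp hq hr using fun i => exists_perm_of_not_cyclic (p i) (q i) (r i) (hpqr i)
  exact ⟨σ, funext hp, funext hq, funext hr⟩

/-- Two pivots imply a paradox (Barbera), 2 voters: if voter 0 is pivotal for
`f^{a>b}` and voter 1 is pivotal for `f^{b>c}`, there is a profile of transitive
rankings on which the pairwise outcomes form a cycle. -/
theorem stmt_5 (fab fbc fca : (Fin 2 → Bool) → Bool)
    (hab : Pivotal fab 0) (hbc : Pivotal fbc 1) :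
    ∃ σ : Fin 2 → Equiv.Perm (Fin 3),
      fab (pairVec 0 1 σ) = fbc (pairVec 1 2 σ) ∧
      fbc (pairVec 1 2 σ) = fca (pairVec 2 0 σ) := by
  obtain ⟨x, hx⟩ := hab.exists_surjective_update
  obtain ⟨y, hy⟩ := hbc.exists_surjective_update
  -- Voter 0 ranks `b, c` as `y` does and voter 1 ranks `a, b` as `x` does; reversing those
  -- pairs for `c > a` keeps both rankings transitive whatever the free coordinates `s, t`.
  let r : Fin 2 → Bool := ![!y 0, !x 1]
  obtain ⟨s, hs⟩ := hx (fca r)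
  obtain ⟨t, ht⟩ := hy (fca r)
  obtain ⟨σ, hσp, hσq, hσr⟩ :=
    exists_profile_pairVec (Function.update x 0 s) (Function.update y 1 t) r (by
      intro i; fin_cases i <;> simp [r, Function.update, eq_comm])
  exact ⟨σ, by rw [hσp, hσq]; exact hs.trans ht.symm, by rw [hσq, hσr]; exact ht⟩
end

section
/- Under uniform voting on 3 alternatives with n voters, if I_1(f^{a>b}) > ε and I_2(f^{b>c}) > ε, then the probability (over a uniform profile σ ∈ S(3)^n) of the event B that voter 1 is pivotal for f^{a>b} at x^{a>b}(σ) and voter 2 is pivotal for f^{b>c} at x^{b>c}(σ) satisfies P[B] ≥ ε³. -/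
/-!
For a single voter with a uniform ranking of `a, b, c`, the bits `[a > b]` and `[b > c]` are
uniform with correlation `-1/3`: of the six rankings, one gives each equal pair of values and two
give each unequal pair. Hence `6ⁿ · P[x^{a>b} = x, x^{b>c} = y]` is the `n`-fold tensor power
`K⊗ⁿ` of the kernel `K = [[1, 2], [2, 1]]` on `Bool`.

The reverse hypercontractive inequality `∑ K⊗ⁿ(x, y) F(x) G(y) ≥ (3/4)ⁿ ‖F‖_{2/3} ‖G‖_{2/3}` for
nonnegative `F, G` (unnormalised norms) tensorises, so it suffices to prove it for `n = 1`, where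
a reverse Hölder inequality reduces it to a polynomial inequality in two variables. Applied to the
indicators of the two pivotal sets, each of size at least `ε 2ⁿ`, it gives at least
`(3/4)ⁿ (ε 2ⁿ)³ = ε³ 6ⁿ` profiles in `B`.
-/

/-- Voter `i` is pivotal for `f` at input `x`. -/
def PivotalAt {n : ℕ} (f : (Fin n → Bool) → Bool) (i : Fin n) (x : Fin n → Bool) : Prop :=
  f (Function.update x i true) ≠ f (Function.update x i false)

instance {n : ℕ} (f : (Fin n → Bool) → Bool) (i : Fin n) (x : Fin n → Bool) :
    Decidable (PivotalAt f i x) := by unfold PivotalAt; infer_instance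

/-- The influence of voter `i` on `f` (uniform measure on the cube). -/
noncomputable def influence {n : ℕ} (f : (Fin n → Bool) → Bool) (i : Fin n) : ℝ :=
  ((Finset.univ.filter fun x : Fin n → Bool => PivotalAt f i x).card : ℝ) / 2^n

open Finset

/-- With `F = u ^ 3` and `G = v ^ 3` this is `∑ K F G ≥ c ‖F‖_{2/3} ‖G‖_{2/3}`; writing the
functions as cubes keeps fractional powers out of the statement. -/
def ReverseHypercontractive {α β : Type*} [Fintype α] [Fintype β] (K : α → β → ℝ) (c : ℝ) :
    Prop :=
  ∀ u : α → ℝ, ∀ v : β → ℝ, 0 ≤ u → 0 ≤ v →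
    c * √(∑ x, u x ^ 2) ^ 3 * √(∑ y, v y ^ 2) ^ 3 ≤ ∑ x, ∑ y, K x y * (u x ^ 3 * v y ^ 3)

namespace ReverseHypercontractive

variable {α β α' β' : Type*} [Fintype α] [Fintype β] [Fintype α'] [Fintype β']

lemma comp_equiv {K : α → β → ℝ} {c : ℝ} (h : ReverseHypercontractive K c) (e : α' ≃ α)
    (f : β' ≃ β) : ReverseHypercontractive (fun x y => K (e x) (f y)) c := by
  intro u v hu hv
  have := h (u ∘ e.symm) (v ∘ f.symm) (fun _ => hu _) (fun _ => hv _)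
  simp only [Function.comp_apply, e.symm.sum_comp (fun x => u x ^ 2),
    f.symm.sum_comp (fun y => v y ^ 2)] at this
  refine this.trans_eq ?_
  rw [← e.sum_comp]
  exact sum_congr rfl fun x _ => by rw [← f.sum_comp]; simp

lemma prod {K₁ : α → β → ℝ} {K₂ : α' → β' → ℝ} {c₁ c₂ : ℝ}
    (h₁ : ReverseHypercontractive K₁ c₁) (h₂ : ReverseHypercontractive K₂ c₂) (hK₁ : 0 ≤ K₁)
    (hc₂ : 0 ≤ c₂) :
    ReverseHypercontractive (fun (x : α × α') (y : β × β') => K₁ x.1 y.1 * K₂ x.2 y.2)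
      (c₁ * c₂) := by
  intro u v hu hv
  set U : α → ℝ := fun x₁ => √(∑ x₂, u (x₁, x₂) ^ 2)
  set V : β → ℝ := fun y₁ => √(∑ y₂, v (y₁, y₂) ^ 2)
  have hU : ∑ x, u x ^ 2 = ∑ x₁, U x₁ ^ 2 := by
    simp only [U, Fintype.sum_prod_type]
    exact sum_congr rfl fun _ _ => (Real.sq_sqrt (sum_nonneg fun _ _ => sq_nonneg _)).symm
  have hV : ∑ y, v y ^ 2 = ∑ y₁, V y₁ ^ 2 := by
    simp only [V, Fintype.sum_prod_type]
    exact sum_congr rfl fun _ _ => (Real.sq_sqrt (sum_nonneg fun _ _ => sq_nonneg _)).symm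
  calc c₁ * c₂ * √(∑ x, u x ^ 2) ^ 3 * √(∑ y, v y ^ 2) ^ 3
      = c₂ * (c₁ * √(∑ x₁, U x₁ ^ 2) ^ 3 * √(∑ y₁, V y₁ ^ 2) ^ 3) := by rw [hU, hV]; ring
    _ ≤ c₂ * ∑ x₁, ∑ y₁, K₁ x₁ y₁ * (U x₁ ^ 3 * V y₁ ^ 3) := by
      gcongr
      exact h₁ U V (fun _ => Real.sqrt_nonneg _) (fun _ => Real.sqrt_nonneg _)
    _ = ∑ x₁, ∑ y₁, K₁ x₁ y₁ * (c₂ * U x₁ ^ 3 * V y₁ ^ 3) := by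
      simp only [mul_sum]
      exact sum_congr rfl fun _ _ => sum_congr rfl fun _ _ => by ring
    _ ≤ ∑ x₁, ∑ y₁, K₁ x₁ y₁ * ∑ x₂, ∑ y₂, K₂ x₂ y₂ * (u (x₁, x₂) ^ 3 * v (y₁, y₂) ^ 3) := by
      gcongr with x₁ _ y₁ _
      · exact hK₁ x₁ y₁
      · exact h₂ _ _ (fun _ => hu _) (fun _ => hv _)
    _ = ∑ x, ∑ y, K₁ x.1 y.1 * K₂ x.2 y.2 * (u x ^ 3 * v y ^ 3) := by
      simp only [Fintype.sum_prod_type, mul_sum]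
      refine sum_congr rfl fun x₁ _ => ?_
      rw [sum_comm]
      exact sum_congr rfl fun _ _ => sum_congr rfl fun _ _ => sum_congr rfl fun _ _ => by ring

lemma pi {K : α → β → ℝ} {c : ℝ} (h : ReverseHypercontractive K c) (hK : 0 ≤ K) (hc : 0 ≤ c)
    (n : ℕ) :
    ReverseHypercontractive (fun (x : Fin n → α) (y : Fin n → β) => ∏ i, K (x i) (y i)) (c ^ n) := by
  induction n with
  | zero =>
    intro u v hu hv
    simp [Real.sqrt_sq (hu _), Real.sqrt_sq (hv _)]
  | succ n ih =>
    have := (h.prod ih hK (pow_nonneg hc n)).comp_equiv (Fin.consEquiv fun _ => α).symm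
      (Fin.consEquiv fun _ => β).symm
    rw [pow_succ']
    convert this using 3 with x y
    exact Fin.prod_univ_succ _

lemma card_mul_card_le {K : α → β → ℝ} {c : ℝ} (h : ReverseHypercontractive K c)
    (A : Finset α) (B : Finset β) :
    c * √(#A : ℝ) ^ 3 * √(#B : ℝ) ^ 3 ≤ ∑ x ∈ A, ∑ y ∈ B, K x y := by
  classical
  have := h (fun x => if x ∈ A then 1 else 0) (fun y => if y ∈ B then 1 else 0)
    (fun _ => by positivity) (fun _ => by positivity)
  simpa [ite_pow, mul_ite, sum_ite_mem, ← sum_filter] using this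

end ReverseHypercontractive

lemma three_mul_sq_mul_le_two_mul_cube_add_cube {X Y : ℝ} (hX : 0 ≤ X) (hY : 0 ≤ Y) :
    3 * (X ^ 2 * Y) ≤ 2 * X ^ 3 + Y ^ 3 := by
  nlinarith [mul_nonneg (sq_nonneg (X - Y)) (by positivity : 0 ≤ 2 * X + Y)]

/-- Reverse Hölder with exponents `2/3` and `-2`: `PQ / ‖(P, Q)‖₂ = ‖(P, Q)‖₋₂`. -/
lemma sqrt_sq_add_sq_pow_three_mul_mul_le {a b P Q : ℝ} (ha : 0 ≤ a) (hb : 0 ≤ b)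
    (hP : 0 ≤ P) (hQ : 0 ≤ Q) :
    √(a ^ 2 + b ^ 2) ^ 3 * (P * Q) ≤ √(P ^ 2 + Q ^ 2) * (a ^ 3 * P + b ^ 3 * Q) := by
  set s := √(a ^ 2 + b ^ 2)
  set r := √(P ^ 2 + Q ^ 2)
  have hs : s ^ 2 = a ^ 2 + b ^ 2 := Real.sq_sqrt (by positivity)
  have hr : r ^ 2 = P ^ 2 + Q ^ 2 := Real.sq_sqrt (by positivity)
  obtain hr0 | hr0 := (Real.sqrt_nonneg _ : 0 ≤ r).eq_or_lt
  · have hP0 : P = 0 := by nlinarith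
    rw [hP0, zero_mul, mul_zero]
    positivity
  have amgm_a := three_mul_sq_mul_le_two_mul_cube_add_cube (mul_nonneg hr0.le ha)
    (mul_nonneg hQ (Real.sqrt_nonneg _) : 0 ≤ Q * s)
  have amgm_b := three_mul_sq_mul_le_two_mul_cube_add_cube (mul_nonneg hr0.le hb)
    (mul_nonneg hP (Real.sqrt_nonneg _) : 0 ≤ P * s)
  have : 2 * r ^ 2 * (s ^ 3 * (P * Q)) ≤ 2 * r ^ 2 * (r * (a ^ 3 * P + b ^ 3 * Q)) := by
    linear_combination P * amgm_a + Q * amgm_b + 3 * P * Q * r ^ 2 * s * hs - P * Q * s ^ 3 * hr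
  exact le_of_mul_le_mul_left this (by positivity)

lemma two_point_polynomial_le {c d : ℝ} (hc : 0 ≤ c) (hd : 0 ≤ d) :
    9 * (c ^ 2 + d ^ 2) ^ 3 * ((c ^ 3 + 2 * d ^ 3) ^ 2 + (2 * c ^ 3 + d ^ 3) ^ 2)
      ≤ 16 * ((c ^ 3 + 2 * d ^ 3) ^ 2 * (2 * c ^ 3 + d ^ 3) ^ 2) := by
  have sos : 16 * ((c ^ 3 + 2 * d ^ 3) ^ 2 * (2 * c ^ 3 + d ^ 3) ^ 2)
        - 9 * (c ^ 2 + d ^ 2) ^ 3 * ((c ^ 3 + 2 * d ^ 3) ^ 2 + (2 * c ^ 3 + d ^ 3) ^ 2)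
      = (c - d) ^ 4 * (19 * c ^ 8 + 76 * c ^ 7 * d + 55 * c ^ 6 * d ^ 2 + 88 * c ^ 5 * d ^ 3
          + 172 * c ^ 4 * d ^ 4 + 88 * c ^ 3 * d ^ 5 + 55 * c ^ 2 * d ^ 6 + 76 * c * d ^ 7
          + 19 * d ^ 8) := by ring
  have : 0 ≤ (c - d) ^ 4 * (19 * c ^ 8 + 76 * c ^ 7 * d + 55 * c ^ 6 * d ^ 2
      + 88 * c ^ 5 * d ^ 3 + 172 * c ^ 4 * d ^ 4 + 88 * c ^ 3 * d ^ 5 + 55 * c ^ 2 * d ^ 6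
      + 76 * c * d ^ 7 + 19 * d ^ 8) := by positivity
  linarith

/-- By reverse Hölder this reduces to `3/4 ‖(c, d)‖₂³ ≤ ‖(P, Q)‖₋₂`, which squared is
`two_point_polynomial_le`. -/
lemma three_div_four_mul_sqrt_pow_three_le {a b c d : ℝ} (ha : 0 ≤ a) (hb : 0 ≤ b)
    (hc : 0 ≤ c) (hd : 0 ≤ d) :
    3 / 4 * √(a ^ 2 + b ^ 2) ^ 3 * √(c ^ 2 + d ^ 2) ^ 3
      ≤ a ^ 3 * c ^ 3 + 2 * (a ^ 3 * d ^ 3) + 2 * (b ^ 3 * c ^ 3) + b ^ 3 * d ^ 3 := by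
  set P := c ^ 3 + 2 * d ^ 3
  set Q := 2 * c ^ 3 + d ^ 3
  set s := √(a ^ 2 + b ^ 2)
  set t := √(c ^ 2 + d ^ 2)
  set r := √(P ^ 2 + Q ^ 2)
  have hP : 0 ≤ P := by positivity
  have hQ : 0 ≤ Q := by positivity
  have core : 3 / 4 * t ^ 3 * r ≤ P * Q := by
    have ht : t ^ 2 = c ^ 2 + d ^ 2 := Real.sq_sqrt (by positivity)
    have hr : r ^ 2 = P ^ 2 + Q ^ 2 := Real.sq_sqrt (by positivity)
    have hsq : (3 / 4 * t ^ 3 * r) ^ 2 ≤ (P * Q) ^ 2 := by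
      have := two_point_polynomial_le hc hd
      calc (3 / 4 * t ^ 3 * r) ^ 2 = 9 / 16 * (t ^ 2) ^ 3 * r ^ 2 := by ring
        _ ≤ (P * Q) ^ 2 := by rw [ht, hr]; linarith
    exact (pow_le_pow_iff_left₀ (by positivity) (by positivity) two_ne_zero).mp hsq
  obtain hr0 | hr0 := (Real.sqrt_nonneg _ : 0 ≤ r).eq_or_lt
  · have hP0 : P = 0 := by
      have : P ^ 2 + Q ^ 2 = 0 := by rw [← Real.sqrt_eq_zero (by positivity)]; exact hr0.symm
      nlinarith
    have hc0 : c = 0 := pow_eq_zero_iff three_ne_zero |>.mp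
      (by nlinarith [pow_nonneg hc 3, pow_nonneg hd 3])
    have hd0 : d = 0 := pow_eq_zero_iff three_ne_zero |>.mp
      (by nlinarith [pow_nonneg hc 3, pow_nonneg hd 3])
    simp [t, hc0, hd0]
  have key : 3 / 4 * s ^ 3 * t ^ 3 * r ≤ (a ^ 3 * P + b ^ 3 * Q) * r :=
    calc 3 / 4 * s ^ 3 * t ^ 3 * r = s ^ 3 * (3 / 4 * t ^ 3 * r) := by ring
      _ ≤ s ^ 3 * (P * Q) := by gcongr
      _ ≤ r * (a ^ 3 * P + b ^ 3 * Q) := sqrt_sq_add_sq_pow_three_mul_mul_le ha hb hP hQ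
      _ = (a ^ 3 * P + b ^ 3 * Q) * r := mul_comm _ _
  calc 3 / 4 * s ^ 3 * t ^ 3 ≤ a ^ 3 * P + b ^ 3 * Q := le_of_mul_le_mul_right key hr0
    _ = _ := by ring

lemma reverseHypercontractive_two_point :
    ReverseHypercontractive (fun x y : Bool => if x = y then (1 : ℝ) else 2) (3 / 4) := by
  intro u v hu hv
  simp only [Fintype.sum_bool, if_true, if_false, Bool.true_eq_false, Bool.false_eq_true]
  have := three_div_four_mul_sqrt_pow_three_le (hu true) (hu false) (hv true) (hv false)
  linarith

def pairCount {T α β : Type*} [Fintype T] [DecidableEq α] [DecidableEq β] (g : T → α)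
    (h : T → β) (a : α) (b : β) : ℕ :=
  #{t | g t = a ∧ h t = b}

lemma card_filter_comp_and_comp {ι T α β : Type*} [Fintype ι] [DecidableEq ι] [Fintype T]
    [Fintype α] [Fintype β] [DecidableEq α] [DecidableEq β] (g : T → α) (h : T → β)
    (p : (ι → α) → Prop) (q : (ι → β) → Prop) [DecidablePred p] [DecidablePred q] :
    #{σ : ι → T | p (g ∘ σ) ∧ q (h ∘ σ)}
      = ∑ x with p x, ∑ y with q y, ∏ i, pairCount g h (x i) (y i) := by
  rw [card_eq_sum_card_fiberwise (f := fun σ => (g ∘ σ, h ∘ σ))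
    (t := ({x | p x} : Finset (ι → α)) ×ˢ ({y | q y} : Finset (ι → β)))
    (fun σ hσ => by simpa using hσ), sum_product]
  refine sum_congr rfl fun x hx => sum_congr rfl fun y hy => ?_
  have hfiber : ({σ ∈ {σ : ι → T | p (g ∘ σ) ∧ q (h ∘ σ)} | (g ∘ σ, h ∘ σ) = (x, y)} : Finset _)
      = Fintype.piFinset fun i => {t | g t = x i ∧ h t = y i} := by
    ext σ
    simp only [mem_filter, mem_univ, true_and, Fintype.mem_piFinset, Prod.mk.injEq] at hx hy ⊢
    constructor
    · rintro ⟨-, rfl, rfl⟩ i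
      exact ⟨rfl, rfl⟩
    · intro hσ
      have hgσ : g ∘ σ = x := funext fun i => (hσ i).1
      have hhσ : h ∘ σ = y := funext fun i => (hσ i).2
      exact ⟨⟨hgσ ▸ hx, hhσ ▸ hy⟩, hgσ, hhσ⟩
  rw [hfiber, Fintype.card_piFinset]
  rfl

lemma pairCount_perm_three (x y : Bool) :
    pairCount (fun π : Equiv.Perm (Fin 3) => decide (π 0 < π 1))
      (fun π => decide (π 1 < π 2)) x y = if x = y then 1 else 2 := by
  revert x y; decide

lemma reverseHypercontractive_pairCount_perm_three :
    ReverseHypercontractive (fun x y : Bool => (pairCount (fun π : Equiv.Perm (Fin 3) =>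
      decide (π 0 < π 1)) (fun π => decide (π 1 < π 2)) x y : ℝ)) (3 / 4) := by
  simpa only [pairCount_perm_three, Nat.cast_ite, Nat.cast_one, Nat.cast_ofNat]
    using reverseHypercontractive_two_point

theorem stmt_7_general (n : ℕ) (fab fbc : (Fin n → Bool) → Bool) (i j : Fin n)
    (ε : ℝ) (hε : 0 < ε)
    (hi : ε < influence fab i) (hj : ε < influence fbc j) :
    ε^3 ≤ ((Finset.univ.filter fun σ : Fin n → Equiv.Perm (Fin 3) =>
        PivotalAt fab i (pairVec 0 1 σ) ∧ PivotalAt fbc j (pairVec 1 2 σ)).card : ℝ)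
      / 6^n := by
  set A : Finset (Fin n → Bool) := {x | PivotalAt fab i x}
  set B : Finset (Fin n → Bool) := {y | PivotalAt fbc j y}
  have hA : ε * 2 ^ n ≤ #A := by
    rw [influence, lt_div_iff₀ (by positivity)] at hi; exact hi.le
  have hB : ε * 2 ^ n ≤ #B := by
    rw [influence, lt_div_iff₀ (by positivity)] at hj; exact hj.le
  have hbound := ((reverseHypercontractive_pairCount_perm_three.pi
    (fun _ _ => Nat.cast_nonneg _) (by norm_num) n).card_mul_card_le A B)
  have hcount := card_filter_comp_and_comp (fun π : Equiv.Perm (Fin 3) => decide (π 0 < π 1))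
    (fun π => decide (π 1 < π 2)) (PivotalAt fab i) (PivotalAt fbc j)
  rw [le_div_iff₀ (by positivity)]
  have hεA : √(ε * 2 ^ n) ≤ √(#A : ℝ) := Real.sqrt_le_sqrt hA
  have hεB : √(ε * 2 ^ n) ≤ √(#B : ℝ) := Real.sqrt_le_sqrt hB
  calc ε ^ 3 * 6 ^ n = (3 / 4) ^ n * (√(ε * 2 ^ n) * √(ε * 2 ^ n)) ^ 3 := by
        rw [Real.mul_self_sqrt (by positivity), mul_pow, ← pow_right_comm,
          show (6 : ℝ) = 3 / 4 * 2 ^ 3 by norm_num, mul_pow]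
        ring
    _ ≤ (3 / 4) ^ n * √(#A : ℝ) ^ 3 * √(#B : ℝ) ^ 3 := by rw [mul_pow, ← mul_assoc]; gcongr
    _ ≤ _ := hbound.trans_eq (mod_cast hcount.symm)

/-- If `I_i(f^{a>b}) > ε` and `I_j(f^{b>c}) > ε` for distinct voters `i ≠ j`, then under
a uniform random profile, with probability at least `ε³` voter `i` is pivotal for
`f^{a>b}` at `x^{a>b}(σ)` and voter `j` is pivotal for `f^{b>c}` at `x^{b>c}(σ)`. -/
theorem stmt_7 (n : ℕ) (fab fbc : (Fin n → Bool) → Bool) (i j : Fin n) (hij : i ≠ j)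
    (ε : ℝ) (hε : 0 < ε)
    (hi : ε < influence fab i) (hj : ε < influence fbc j) :
    ε^3 ≤ ((Finset.univ.filter fun σ : Fin n → Equiv.Perm (Fin 3) =>
        PivotalAt fab i (pairVec 0 1 σ) ∧ PivotalAt fbc j (pairVec 1 2 σ)).card : ℝ)
      / 6^n :=
  stmt_7_general n fab fbc i j ε hε hi hj
end

section
/- Let f : {-1,1}^n → {-1,1} and j ∈ [n], and suppose I_i(f) ≤ ε/n for all i ≠ j. Then there exists a function g of the single coordinate x_j such that P[f(x) ≠ g(x_j)] ≤ 2ε. -/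
open Finset Function

section BoolValued

variable {α : Type*} [Fintype α]

theorem card_filter_eq_true_add_card_filter_eq_false (u : α → Bool) :
    #{x | u x = true} + #{x | u x = false} = Fintype.card α := by
  simpa using card_filter_add_card_filter_not (s := univ) (fun x => u x = true)

theorem card_filter_eq_true_le_add_card_filter_ne [DecidableEq α] (u v : α → Bool) :
    #{x | u x = true} ≤ #{x | v x = true} + #{x | u x ≠ v x} := by
  refine (card_le_card fun x hx => ?_).trans (card_union_le _ _)
  by_cases hv : v x = true <;> simp_all

theorem exists_card_filter_ne_eq_min (u : α → Bool) :
    ∃ c, #{x | u x ≠ c} = min #{x | u x = true} #{x | u x = false} := by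
  rcases le_total #{x | u x = true} #{x | u x = false} with h | h
  · exact ⟨false, by simp [min_eq_left h]⟩
  · exact ⟨true, by simp [min_eq_right h]⟩

end BoolValued

section Cube

variable {ι : Type*} [Fintype ι] [DecidableEq ι]

theorem card_filter_update (p : (ι → Bool) → Prop) [DecidablePred p] (k : ι) (b : Bool) :
    #{x | p (update x k b)} = 2 * #{x | x k = b ∧ p x} := by
  rw [← card_filter_add_card_filter_not (s := {x | p (update x k b)}) (fun x => x k = b),
    filter_filter, filter_filter, two_mul]
  congr 1
  · congr 1; ext x; simp only [mem_filter, mem_univ, true_and]; constructor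
    · rintro ⟨hp, hb⟩; exact ⟨hb, by simpa [← hb] using hp⟩
    · rintro ⟨hb, hp⟩; exact ⟨by simpa [← hb] using hp, hb⟩
  · refine card_nbij' (update · k b) (update · k (!b)) ?_ ?_ ?_ ?_ <;> intro x hx <;>
      simp only [coe_filter, mem_univ, true_and, Set.mem_ofPred_eq] at hx ⊢
    · simpa using hx.1
    · obtain ⟨rfl, hp⟩ := hx; simpa using hp
    · rw [update_idem, ← Bool.eq_not.2 hx.2]; exact update_eq_self k x
    · obtain ⟨rfl, -⟩ := hx; simp

theorem card_filter_update_false_add_true (p : (ι → Bool) → Prop) [DecidablePred p] (k : ι) :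
    #{x | p (update x k false)} + #{x | p (update x k true)} = 2 * #{x | p x} := by
  rw [card_filter_update, card_filter_update, ← mul_add, add_comm,
    ← card_filter_add_card_filter_not (s := {x | p x}) (fun x => x k = true)]
  simp [filter_filter, and_comm]

end Cube

theorem card_pivotalAt_update_false_add_true {n : ℕ} (h : (Fin n → Bool) → Bool) {i k : Fin n}
    (hik : i ≠ k) :
    #{x | PivotalAt (fun y => h (update y k false)) i x}
      + #{x | PivotalAt (fun y => h (update y k true)) i x} = 2 * #{x | PivotalAt h i x} := by
  simp only [PivotalAt, update_comm hik]
  exact card_filter_update_false_add_true (PivotalAt h i) k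

theorem two_mul_min_card_le_sum_card_pivotalAt {n : ℕ} (S : Finset (Fin n))
    (h : (Fin n → Bool) → Bool) (hS : DependsOn h S) :
    2 * min #{x | h x = true} #{x | h x = false} ≤ ∑ i ∈ S, #{x | PivotalAt h i x} := by
  induction S using Finset.induction_on generalizing h with
  | empty =>
    obtain ⟨c, hc⟩ : ∃ c, ∀ x, h x = c := ⟨h 0, fun x => DependsOn.empty (by simpa using hS) x 0⟩
    cases c <;> simp [hc]
  | insert k S hk ih =>
    set h₀ := fun x => h (update x k false)
    set h₁ := fun x => h (update x k true)
    have hS' : ∀ b, DependsOn (fun x => h (update x k b)) S := fun b => by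
      simpa [erase_insert hk] using hS.update k b
    have ih₀ := ih h₀ (hS' false)
    have ih₁ := ih h₁ (hS' true)
    have hT : #{x | h₀ x = true} + #{x | h₁ x = true} = 2 * #{x | h x = true} :=
      card_filter_update_false_add_true (h · = true) k
    have hF : #{x | h₀ x = false} + #{x | h₁ x = false} = 2 * #{x | h x = false} :=
      card_filter_update_false_add_true (h · = false) k
    have hpiv : 2 * ∑ i ∈ S, #{x | PivotalAt h i x}
        = ∑ i ∈ S, #{x | PivotalAt h₀ i x} + ∑ i ∈ S, #{x | PivotalAt h₁ i x} := by
      rw [mul_sum, ← sum_add_distrib]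
      exact sum_congr rfl fun i hi =>
        (card_pivotalAt_update_false_add_true h (ne_of_mem_of_not_mem hi hk)).symm
    have hN₀ := card_filter_eq_true_add_card_filter_eq_false h₀
    have hN₁ := card_filter_eq_true_add_card_filter_eq_false h₁
    -- `#{h₀ = true}` and `#{h₁ = true}` differ by at most the pivotal count of `k`, which pays
    -- for the two restrictions having different minorities.
    have hd₀ : #{x | h₀ x = true} ≤ #{x | h₁ x = true} + #{x | h₁ x ≠ h₀ x} := by
      simpa only [ne_comm] using card_filter_eq_true_le_add_card_filter_ne h₀ h₁
    have hd₁ := card_filter_eq_true_le_add_card_filter_ne h₁ h₀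
    rw [sum_insert hk, show #{x | PivotalAt h k x} = #{x | h₁ x ≠ h₀ x} from rfl]
    omega

theorem exists_two_mul_card_ne_le_sum_card_pivotalAt {n : ℕ} (f : (Fin n → Bool) → Bool)
    (j : Fin n) :
    ∃ g : Bool → Bool,
      2 * #{x | f x ≠ g (x j)} ≤ ∑ i ∈ univ.erase j, #{x | PivotalAt f i x} := by
  have hf : DependsOn f ↑(univ : Finset (Fin n)) := by simpa using dependsOn_univ f
  choose g hg using fun b => exists_card_filter_ne_eq_min fun x => f (update x j b)
  have herr : #{x | f (update x j false) ≠ g false} + #{x | f (update x j true) ≠ g true}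
      = 2 * #{x | f x ≠ g (x j)} := by
    simpa using card_filter_update_false_add_true (fun x => f x ≠ g (x j)) j
  have hpiv : ∑ i ∈ univ.erase j, #{x | PivotalAt (fun y => f (update y j false)) i x}
      + ∑ i ∈ univ.erase j, #{x | PivotalAt (fun y => f (update y j true)) i x}
      = 2 * ∑ i ∈ univ.erase j, #{x | PivotalAt f i x} := by
    rw [mul_sum, ← sum_add_distrib]
    exact sum_congr rfl fun i hi => card_pivotalAt_update_false_add_true f (ne_of_mem_erase hi)
  have hmin : ∀ b, 2 * min #{x | f (update x j b) = true} #{x | f (update x j b) = false}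
      ≤ ∑ i ∈ univ.erase j, #{x | PivotalAt (fun y => f (update y j b)) i x} := fun b =>
    two_mul_min_card_le_sum_card_pivotalAt _ _ (hf.update j b)
  refine ⟨g, ?_⟩
  have h₀ := hmin false
  have h₁ := hmin true
  rw [← hg] at h₀ h₁
  omega

/-- If all influences of `f` except possibly that of coordinate `j` are at most
`ε/n`, then `f` is `2ε`-close to a function of coordinate `j` alone. -/
theorem stmt_10 (n : ℕ) (f : (Fin n → Bool) → Bool) (j : Fin n) (ε : ℝ) (hε : 0 ≤ ε)
    (hinf : ∀ i : Fin n, i ≠ j → influence f i ≤ ε / n) :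
    ∃ g : Bool → Bool,
      ((Finset.univ.filter fun x : Fin n → Bool => f x ≠ g (x j)).card : ℝ) / 2^n
        ≤ 2 * ε := by
  obtain ⟨g, hg⟩ := exists_two_mul_card_ne_le_sum_card_pivotalAt f j
  refine ⟨g, ?_⟩
  have hsum : ∑ i ∈ univ.erase j, influence f i ≤ ε :=
    calc ∑ i ∈ univ.erase j, influence f i ≤ ∑ _i ∈ univ.erase j, ε / n :=
          sum_le_sum fun i hi => hinf i (ne_of_mem_erase hi)
      _ ≤ ∑ _i : Fin n, ε / n := sum_le_sum_of_subset_of_nonneg (erase_subset j univ)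
          fun _ _ _ => div_nonneg hε n.cast_nonneg
      _ = ε := by
          rw [sum_const, card_univ, Fintype.card_fin, nsmul_eq_mul,
            mul_div_cancel₀ _ (Nat.cast_ne_zero.2 (Fin.pos j).ne')]
  have herr : 2 * ((#{x | f x ≠ g (x j)} : ℕ) / 2 ^ n : ℝ)
      ≤ ∑ i ∈ univ.erase j, influence f i := by
    simp only [influence, ← sum_div, ← mul_div_assoc]
    gcongr
    exact_mod_cast hg
  linarith
end

section
/- (Kalai's formula) Let F be an IIA constitution on 3 alternatives with pairwise functions f^{a>b}, f^{b>c}, f^{c>a} : {-1,1}^n → {-1,1}, and let voters vote uniformly at random. Then the probability of a non-transitive outcome equals P(F) = (1 + E[f^{a>b}(x^{a>b}) f^{b>c}(x^{b>c})] + E[f^{b>c}(x^{b>c}) f^{c>a}(x^{c>a})] + E[f^{c>a}(x^{c>a}) f^{a>b}(x^{a>b})]) / 4. -/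
/-- The ±1 value of a bit. -/
noncomputable def sgn (b : Bool) : ℝ := if b then 1 else -1

open Finset

lemma ite_and_eq_sgn (u v w : Bool) :
    (if u = v ∧ v = w then 1 else 0 : ℝ) =
      (1 + sgn u * sgn v + sgn v * sgn w + sgn w * sgn u) / 4 := by
  cases u <;> cases v <;> cases w <;> norm_num [sgn]

lemma card_filter_eq_and_eq {α : Type*} [Fintype α] (u v w : α → Bool) :
    (#{x | u x = v x ∧ v x = w x} : ℝ) =
      (Fintype.card α + ∑ x, sgn (u x) * sgn (v x) + ∑ x, sgn (v x) * sgn (w x)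
        + ∑ x, sgn (w x) * sgn (u x)) / 4 := by
  rw [← sum_boole, Finset.sum_congr rfl fun x _ => ite_and_eq_sgn (u x) (v x) (w x),
    ← sum_div, sum_add_distrib, sum_add_distrib, sum_add_distrib, sum_const, card_univ,
    nsmul_one]

lemma card_profiles (n : ℕ) : Fintype.card (Fin n → Equiv.Perm (Fin 3)) = 6 ^ n := by
  simp [Fintype.card_perm, Nat.factorial]

/-- Kalai's formula: for an IIA constitution on 3 alternatives with pairwise functions
`f^{a>b}, f^{b>c}, f^{c>a}`, the probability of a non-transitive outcome under uniform
voting equals `(1 + E[f^{a>b} f^{b>c}] + E[f^{b>c} f^{c>a}] + E[f^{c>a} f^{a>b}])/4`. -/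
theorem stmt_11 (n : ℕ) (fab fbc fca : (Fin n → Bool) → Bool) :
    ((Finset.univ.filter fun σ : Fin n → Equiv.Perm (Fin 3) =>
        fab (pairVec 0 1 σ) = fbc (pairVec 1 2 σ) ∧
        fbc (pairVec 1 2 σ) = fca (pairVec 2 0 σ)).card : ℝ) / 6^n =
    (1 + (∑ σ : Fin n → Equiv.Perm (Fin 3),
            sgn (fab (pairVec 0 1 σ)) * sgn (fbc (pairVec 1 2 σ))) / 6^n
       + (∑ σ : Fin n → Equiv.Perm (Fin 3),
            sgn (fbc (pairVec 1 2 σ)) * sgn (fca (pairVec 2 0 σ))) / 6^n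
       + (∑ σ : Fin n → Equiv.Perm (Fin 3),
            sgn (fca (pairVec 2 0 σ)) * sgn (fab (pairVec 0 1 σ))) / 6^n) / 4 := by
  rw [card_filter_eq_and_eq, card_profiles]
  have h6 : (6 : ℝ) ^ n ≠ 0 := by positivity
  push_cast
  field_simp
end

section
/- Let N₁,N₂,N₃ be standard Gaussians (each N(0,1)) with pairwise correlations E[N_i N_{i+1}] = -1/3 (indices mod 3), and let g_i = sgn(x - t_i) be threshold functions. If for all i and all u ∈ {-1,1}, P[g_i(N_i) = u, g_{i+1}(N_{i+1}) = -u] ≤ 1-ε, then P[g_1(N_1) = g_2(N_2) = g_3(N_3)] ≥ (ε/2)^{18}. -/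
open MeasureTheory ProbabilityTheory

/-- The standard Gaussian measure on `ℝ³` (product of three standard Gaussians). -/
noncomputable def stdGauss3 : Measure (Fin 3 → ℝ) :=
  Measure.pi fun _ : Fin 3 => gaussianReal 0 1

/-- The threshold function `sgn(x - t)`. -/
noncomputable def thresh (t : ℝ) (x : ℝ) : ℝ := if t ≤ x then 1 else -1

/-!
Write `Nᵢ = ∑ k, A i k * ω k` and `Eᵢ = {tᵢ ≤ Nᵢ}`. Any two indices of `Fin 3` are cyclically
adjacent, so the hypothesis bounds every `P[Eⱼ \ Eᵢ]` by `1 - ε`; hence either every `P[Eᵢ]` or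
every `P[Eᵢᶜ]` is at least `ε / 2`, and the second case is the first one for `(-A, -t)`.
In the first case the tail bound `P[N ≥ s] ≤ exp (-s² / 2) / 2` gives `ε / 2 ≤ exp (-T² / 2) / 2`
for `T = max (0, max tᵢ)`. The vector `w = ∑ᵢ Aᵢ` is a unit vector with `⟨Aᵢ, w⟩ = 1 / 3`, so on
the cube of side `1 / 2` centred at `(3 T + 3 / 2) w` every `Nᵢ` exceeds `T`: all three thresholds
agree there, and the Gaussian mass of that cube is at least `(ε / 2) ^ 18`.
-/

open Set Real

lemma thresh_eq_one_iff {t x : ℝ} : thresh t x = 1 ↔ t ≤ x := by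
  unfold thresh; split_ifs with h <;> norm_num [h]

lemma thresh_eq_neg_one_iff {t x : ℝ} : thresh t x = -1 ↔ x < t := by
  rw [← not_le]; unfold thresh; split_ifs with h <;> norm_num [h]

lemma forall₂_fin_three_of_forall_add_one {P : Fin 3 → Fin 3 → Prop} (hrefl : ∀ i, P i i)
    (hsucc : ∀ i, P i (i + 1)) (hpred : ∀ i, P (i + 1) i) : ∀ i j, P i j := by
  intro i j
  fin_cases i <;> fin_cases j
  exacts [hrefl 0, hsucc 0, hpred 2, hpred 0, hrefl 1, hsucc 1, hsucc 2, hpred 1, hrefl 2]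

lemma forall_le_measureReal_or_forall_le_measureReal_compl {Ω ι : Type*} [MeasurableSpace Ω]
    {μ : Measure Ω} [IsProbabilityMeasure μ] {E : ι → Set Ω} (hE : ∀ i, MeasurableSet (E i))
    {ε : ℝ} (h : ∀ i j, μ.real (E j \ E i) ≤ 1 - ε) :
    (∀ i, ε / 2 ≤ μ.real (E i)) ∨ ∀ i, ε / 2 ≤ μ.real (E i)ᶜ := by
  by_contra! ⟨⟨i, hi⟩, j, hj⟩
  rw [probReal_compl_eq_one_sub (hE j)] at hj
  linarith [h i j, le_measureReal_sdiff (μ := μ) (s₁ := E j) (s₂ := E i)]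

section StandardGaussian

lemma gaussianPDFReal_zero_one (x : ℝ) :
    gaussianPDFReal 0 1 x = (√(2 * π))⁻¹ * exp (-x ^ 2 / 2) := by
  simp [gaussianPDFReal]

lemma gaussianPDFReal_zero_one_le_of_abs_le {x y : ℝ} (h : |x| ≤ |y|) :
    gaussianPDFReal 0 1 y ≤ gaussianPDFReal 0 1 x := by
  rw [gaussianPDFReal_zero_one, gaussianPDFReal_zero_one]
  gcongr (√(2 * π))⁻¹ * exp ?_
  linarith [sq_le_sq.mpr h]

lemma prod_gaussianPDFReal_zero_one {ι : Type*} [Fintype ι] (y : ι → ℝ) :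
    ∏ k, gaussianPDFReal 0 1 (y k) =
      (√(2 * π))⁻¹ ^ Fintype.card ι * exp (-(∑ k, y k ^ 2) / 2) := by
  simp only [gaussianPDFReal_zero_one]
  rw [Finset.prod_mul_distrib, Finset.prod_const, ← exp_sum, Finset.card_univ]
  simp [Finset.sum_div, neg_div]

lemma gaussianReal_Ici_zero : gaussianReal 0 1 (Ici 0) = 2⁻¹ := by
  set μ := gaussianReal 0 1
  have := nullSingletonClass_gaussianReal (μ := 0) one_ne_zero
  have hsymm : μ (Iic 0) = μ (Ici 0) := by
    have h := congrArg (· (Ici (0 : ℝ))) (gaussianReal_map_neg (μ := 0) (v := 1))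
    simp only [neg_zero] at h
    rw [← h, Measure.map_apply measurable_neg measurableSet_Ici]
    congr 1; ext x; simp
  have hsum : μ (Ici 0) + μ (Ici 0) = 1 := by
    calc μ (Ici 0) + μ (Ici 0) = μ (Ici 0) + μ (Ici 0)ᶜ := by
          rw [compl_Ici, measure_congr (Iio_ae_eq_Iic (μ := μ)), hsymm]
      _ = 1 := prob_add_prob_compl measurableSet_Ici
  exact ENNReal.eq_inv_of_mul_eq_one_left (by rw [mul_two, hsum])

/-- The factor `1 / 2` is needed: the Chernoff bound `exp (-s ^ 2 / 2)` alone is too weak for the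
constant `(ε / 2) ^ 18`. -/
lemma gaussianReal_Ici_le {s : ℝ} (hs : 0 ≤ s) :
    (gaussianReal 0 1).real (Ici s) ≤ exp (-s ^ 2 / 2) / 2 := by
  have hshift : gaussianReal 0 1 (Ici s) = gaussianReal (-s) 1 (Ici 0) := by
    rw [← zero_sub, ← gaussianReal_map_sub_const,
      Measure.map_apply (measurable_sub_const s) measurableSet_Ici]
    congr 1; ext x; simp
  have hpdf : ∀ x ∈ Ici (0 : ℝ),
      gaussianPDF (-s) 1 x ≤ ENNReal.ofReal (exp (-s ^ 2 / 2)) * gaussianPDF 0 1 x := by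
    intro x hx
    rw [gaussianPDF, gaussianPDF, ← ENNReal.ofReal_mul (exp_pos _).le]
    refine ENNReal.ofReal_le_ofReal ?_
    simp only [gaussianPDFReal, NNReal.coe_one, mul_one, sub_zero, sub_neg_eq_add]
    rw [mul_left_comm, ← exp_add]
    gcongr
    nlinarith [mul_nonneg hs (mem_Ici.mp hx)]
  have hle : gaussianReal 0 1 (Ici s) ≤ ENNReal.ofReal (exp (-s ^ 2 / 2)) * 2⁻¹ := by
    rw [hshift, gaussianReal_apply _ one_ne_zero, ← gaussianReal_Ici_zero,
      gaussianReal_apply _ one_ne_zero, ← lintegral_const_mul _ (measurable_gaussianPDF 0 1)]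
    exact setLIntegral_mono ((measurable_gaussianPDF 0 1).const_mul _) hpdf
  calc (gaussianReal 0 1).real (Ici s) ≤ (ENNReal.ofReal (exp (-s ^ 2 / 2)) * 2⁻¹).toReal :=
        ENNReal.toReal_mono (by finiteness) hle
    _ = exp (-s ^ 2 / 2) / 2 := by
        simp [ENNReal.toReal_ofReal (exp_pos _).le, div_eq_mul_inv]

lemma gaussianReal_Icc_ge (b : ℝ) {δ : ℝ} (hδ : 0 ≤ δ) :
    2 * δ * gaussianPDFReal 0 1 (|b| + δ) ≤ (gaussianReal 0 1).real (Icc (b - δ) (b + δ)) := by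
  have hpdf : ∀ x ∈ Icc (b - δ) (b + δ),
      ENNReal.ofReal (gaussianPDFReal 0 1 (|b| + δ)) ≤ gaussianPDF 0 1 x := by
    intro x hx
    refine ENNReal.ofReal_le_ofReal (gaussianPDFReal_zero_one_le_of_abs_le ?_)
    rw [abs_of_nonneg (by positivity : 0 ≤ |b| + δ), abs_le]
    constructor <;> linarith [hx.1, hx.2, neg_abs_le b, le_abs_self b]
  refine (ENNReal.ofReal_le_iff_le_toReal (measure_ne_top _ _)).1 ?_
  calc ENNReal.ofReal (2 * δ * gaussianPDFReal 0 1 (|b| + δ))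
      = ∫⁻ _ in Icc (b - δ) (b + δ), ENNReal.ofReal (gaussianPDFReal 0 1 (|b| + δ)) := by
        rw [setLIntegral_const, Real.volume_Icc,
          ← ENNReal.ofReal_mul (gaussianPDFReal_nonneg 0 1 _)]
        ring_nf
    _ ≤ gaussianReal 0 1 (Icc (b - δ) (b + δ)) := by
        rw [gaussianReal_apply _ one_ne_zero]
        exact setLIntegral_mono (measurable_gaussianPDF 0 1) hpdf

variable {ι : Type*} [Fintype ι]

lemma measurable_sum_mul (a : ι → ℝ) : Measurable fun ω : ι → ℝ => ∑ k, a k * ω k :=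
  Finset.measurable_sum _ (by fun_prop)

lemma map_pi_gaussianReal_sum_mul (a : ι → ℝ) :
    (Measure.pi fun _ : ι => gaussianReal 0 1).map (fun ω => ∑ k, a k * ω k)
      = gaussianReal 0 (∑ k, a k ^ 2).toNNReal := by
  apply Measure.ext_of_charFun
  ext t
  rw [charFun_apply_real, integral_map (measurable_sum_mul a).aemeasurable (by fun_prop),
    charFun_gaussianReal]
  have h : ∀ x : ι → ℝ, Complex.exp (t * ↑(∑ k, a k * x k) * Complex.I)
      = ∏ k, Complex.exp (↑(t * a k) * ↑(x k) * Complex.I) := by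
    intro x
    rw [← Complex.exp_sum]
    push_cast
    rw [Finset.mul_sum, Finset.sum_mul]
    exact congrArg _ (Finset.sum_congr rfl fun k _ => by ring)
  simp_rw [h]
  rw [integral_fintype_prod_eq_prod
    (f := fun k (x : ℝ) => Complex.exp (↑(t * a k) * ↑x * Complex.I))]
  simp_rw [← charFun_apply_real, charFun_gaussianReal, ← Complex.exp_sum]
  rw [Real.coe_toNNReal _ (Finset.sum_nonneg fun k _ => sq_nonneg (a k))]
  push_cast
  simp only [mul_zero, zero_mul, zero_sub, one_mul, Finset.sum_mul, Finset.sum_div,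
    ← Finset.sum_neg_distrib]
  exact congrArg _ (Finset.sum_congr rfl fun k _ => by ring)

lemma measureReal_pi_gaussianReal_le_sum_mul_le {a : ι → ℝ} (ha : ∑ k, a k ^ 2 = 1) {s : ℝ}
    (hs : 0 ≤ s) :
    (Measure.pi fun _ : ι => gaussianReal 0 1).real {ω | s ≤ ∑ k, a k * ω k}
      ≤ exp (-s ^ 2 / 2) / 2 := by
  have h := map_measureReal_apply (μ := Measure.pi fun _ : ι => gaussianReal 0 1)
    (measurable_sum_mul a) (measurableSet_Ici (a := s))
  rw [map_pi_gaussianReal_sum_mul, ha, Real.toNNReal_one] at h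
  exact h ▸ gaussianReal_Ici_le hs

lemma prod_le_measureReal_pi_gaussianReal_pi_Icc (b : ι → ℝ) {δ : ℝ} (hδ : 0 ≤ δ) :
    ∏ k, 2 * δ * gaussianPDFReal 0 1 (|b k| + δ)
      ≤ (Measure.pi fun _ : ι => gaussianReal 0 1).real
          (univ.pi fun k => Icc (b k - δ) (b k + δ)) := by
  rw [measureReal_def, Measure.pi_pi, ENNReal.toReal_prod]
  exact Finset.prod_le_prod (fun k _ => mul_nonneg (by positivity) (gaussianPDFReal_nonneg 0 1 _))
    fun k _ => gaussianReal_Icc_ge (b k) hδ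

end StandardGaussian

lemma sq_sum_mul_le_card_mul_sq {ι : Type*} [Fintype ι] {a x : ι → ℝ} (ha : ∑ k, a k ^ 2 = 1)
    {δ : ℝ} (hx : ∀ k, |x k| ≤ δ) : (∑ k, a k * x k) ^ 2 ≤ Fintype.card ι * δ ^ 2 := by
  calc (∑ k, a k * x k) ^ 2 ≤ (∑ k, a k ^ 2) * ∑ k, x k ^ 2 :=
        Finset.sum_mul_sq_le_sq_mul_sq _ _ _
    _ ≤ ∑ _k : ι, δ ^ 2 := by
        rw [ha, one_mul]
        exact Finset.sum_le_sum fun k _ => sq_le_sq' (abs_le.mp (hx k)).1 (abs_le.mp (hx k)).2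
    _ = Fintype.card ι * δ ^ 2 := by simp

lemma abs_sum_mul_sub_sum_mul_lt {a b x : Fin 3 → ℝ} (ha : ∑ k, a k ^ 2 = 1)
    (hx : x ∈ univ.pi fun k => Icc (b k - 1 / 4) (b k + 1 / 4)) :
    |∑ k, a k * x k - ∑ k, a k * b k| < 1 / 2 := by
  have hdev : ∀ k, |x k - b k| ≤ 1 / 4 := fun k => by
    have := hx k (mem_univ k)
    rw [abs_le]; constructor <;> linarith [this.1, this.2]
  rw [← Finset.sum_sub_distrib]
  simp_rw [← mul_sub]
  refine abs_lt_of_sq_lt_sq ?_ (by norm_num)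
  calc (∑ k, a k * (x k - b k)) ^ 2 ≤ Fintype.card (Fin 3) * (1 / 4) ^ 2 :=
        sq_sum_mul_le_card_mul_sq ha hdev
    _ < (1 / 2) ^ 2 := by norm_num

section Correlation

variable {A : Matrix (Fin 3) (Fin 3) ℝ}

lemma sum_mul_sum_rows_eq (hvar : ∀ i, ∑ k, A i k ^ 2 = 1)
    (hcov : ∀ i, ∑ k, A i k * A (i + 1) k = -1 / 3) (i : Fin 3) :
    ∑ k, A i k * ∑ j, A j k = 1 / 3 := by
  have c0 : ∑ k, A 0 k * A 1 k = -1 / 3 := hcov 0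
  have c1 : ∑ k, A 1 k * A 2 k = -1 / 3 := hcov 1
  have c2 : ∑ k, A 2 k * A 0 k = -1 / 3 := hcov 2
  have h0 := hvar 0; have h1 := hvar 1; have h2 := hvar 2
  simp only [Fin.sum_univ_three] at h0 h1 h2 c0 c1 c2 ⊢
  match i with
  | 0 => linear_combination h0 + c0 + c2
  | 1 => linear_combination h1 + c0 + c1
  | 2 => linear_combination h2 + c1 + c2

lemma sum_sq_sum_rows_eq_one (hvar : ∀ i, ∑ k, A i k ^ 2 = 1)
    (hcov : ∀ i, ∑ k, A i k * A (i + 1) k = -1 / 3) : ∑ k, (∑ i, A i k) ^ 2 = 1 := by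
  calc ∑ k, (∑ i, A i k) ^ 2 = ∑ i, ∑ k, A i k * ∑ j, A j k := by
        simp_rw [sq, Finset.sum_mul]; exact Finset.sum_comm
    _ = 1 := by simp only [sum_mul_sum_rows_eq hvar hcov]; norm_num

end Correlation

lemma exp_div_two_pow_le_prod_gaussianPDFReal {T : ℝ} (hT : 0 ≤ T) {w : Fin 3 → ℝ}
    (hw : ∑ k, w k ^ 2 = 1) :
    (exp (-T ^ 2 / 2) / 2) ^ 18
      ≤ ∏ k, 2 * (1 / 4) * gaussianPDFReal 0 1 (|(3 * T + 3 / 2) * w k| + 1 / 4) := by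
  set c := 3 * T + 3 / 2 with hc_def
  have hc : 0 ≤ c := by positivity
  have habs : ∑ k, |w k| ≤ 7 / 4 := by
    have h := Finset.sum_mul_sq_le_sq_mul_sq Finset.univ (fun _ => (1 : ℝ)) (fun k => |w k|)
    simp only [one_mul, one_pow, Finset.sum_const, Finset.card_univ, Fintype.card_fin, sq_abs,
      hw, nsmul_eq_mul, Nat.cast_ofNat] at h
    nlinarith [Finset.sum_nonneg fun k (_ : k ∈ Finset.univ) => abs_nonneg (w k)]
  have hsq : ∑ k, (|c * w k| + 1 / 4) ^ 2 ≤ (3 * T + 2) ^ 2 := by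
    have e : ∀ k, (|c * w k| + 1 / 4) ^ 2 = c ^ 2 * w k ^ 2 + c / 2 * |w k| + 1 / 16 := fun k => by
      rw [abs_mul, abs_of_nonneg hc]; nlinarith [sq_abs (w k)]
    simp only [e, Finset.sum_add_distrib, ← Finset.mul_sum, hw, Finset.sum_const,
      Finset.card_univ, Fintype.card_fin, nsmul_eq_mul, Nat.cast_ofNat]
    nlinarith [mul_le_mul_of_nonneg_left habs hc]
  have hpi : (1 : ℝ) / 16 ≤ (√(2 * π))⁻¹ ^ 3 := by
    rw [inv_pow, one_div]
    refine inv_anti₀ (by positivity) ?_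
    have h2pi : √(2 * π) ≤ 251 / 100 := by
      rw [sqrt_le_left (by norm_num)]; nlinarith [pi_lt_d2]
    calc √(2 * π) ^ 3 ≤ (251 / 100) ^ 3 := by gcongr
      _ ≤ 16 := by norm_num
  have he4 : exp 4 ≤ 2 ^ 11 := by
    calc exp 4 = exp 1 ^ 4 := by rw [← exp_nat_mul]; norm_num
      _ ≤ 3 ^ 4 := by gcongr; exact exp_one_lt_three.le
      _ ≤ 2 ^ 11 := by norm_num
  rw [Finset.prod_mul_distrib, Finset.prod_const, prod_gaussianPDFReal_zero_one,
    Finset.card_univ, Fintype.card_fin]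
  -- `9 T² = (3 T + 2)² / 2 + (3 T - 2)² / 2 - 4`
  have hexp : exp (-T ^ 2 / 2) ^ 18 ≤ exp 4 * exp (-(3 * T + 2) ^ 2 / 2) := by
    rw [← exp_nat_mul, ← exp_add]
    gcongr
    nlinarith [sq_nonneg (3 * T - 2)]
  calc (exp (-T ^ 2 / 2) / 2) ^ 18 = exp (-T ^ 2 / 2) ^ 18 / 2 ^ 18 := div_pow _ _ _
    _ ≤ 2 ^ 11 * exp (-(3 * T + 2) ^ 2 / 2) / 2 ^ 18 := by
        gcongr
        exact hexp.trans (by gcongr)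
    _ = (2 * (1 / 4)) ^ 3 * (1 / 16) * exp (-(3 * T + 2) ^ 2 / 2) := by ring
    _ ≤ (2 * (1 / 4)) ^ 3 * ((√(2 * π))⁻¹ ^ 3 * exp (-(∑ k, (|c * w k| + 1 / 4) ^ 2) / 2)) := by
        rw [← mul_assoc]
        gcongr

instance isProbabilityMeasure_stdGauss3 : IsProbabilityMeasure stdGauss3 := by
  unfold stdGauss3; infer_instance

lemma le_stdGauss3_forall_lt {A : Matrix (Fin 3) (Fin 3) ℝ} (hvar : ∀ i, ∑ k, A i k ^ 2 = 1)
    (hcov : ∀ i, ∑ k, A i k * A (i + 1) k = -1 / 3) {t : Fin 3 → ℝ} {ε : ℝ} (hε0 : 0 ≤ ε)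
    (hε1 : ε ≤ 1) (h : ∀ i, ε / 2 ≤ stdGauss3.real {ω | t i ≤ ∑ k, A i k * ω k}) :
    (ε / 2) ^ 18 ≤ stdGauss3.real {ω | ∀ i, t i < ∑ k, A i k * ω k} := by
  obtain ⟨j, hj⟩ := Finite.exists_max t
  set T := max (t j) 0 with hT
  have hεT : ε / 2 ≤ exp (-T ^ 2 / 2) / 2 := by
    rcases le_total 0 (t j) with h0 | h0
    · rw [hT, max_eq_left h0]
      exact (h j).trans (measureReal_pi_gaussianReal_le_sum_mul_le (hvar j) h0)
    · rw [hT, max_eq_right h0]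
      norm_num
      linarith
  set w : Fin 3 → ℝ := fun k => ∑ i, A i k
  set c := 3 * T + 3 / 2 with hc
  have hbox : (univ.pi fun k => Icc (c * w k - 1 / 4) (c * w k + 1 / 4))
      ⊆ {ω | ∀ i, t i < ∑ k, A i k * ω k} := by
    intro ω hω i
    have hdev := abs_lt.mp (abs_sum_mul_sub_sum_mul_lt (hvar i) hω)
    have hcenter : ∑ k, A i k * (c * w k) = T + 1 / 2 := by
      calc ∑ k, A i k * (c * w k) = c * ∑ k, A i k * w k := by
            rw [Finset.mul_sum]; exact Finset.sum_congr rfl fun k _ => by ring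
        _ = T + 1 / 2 := by rw [sum_mul_sum_rows_eq hvar hcov i, hc]; ring
    linarith [hj i, le_max_left (t j) 0]
  calc (ε / 2) ^ 18 ≤ (exp (-T ^ 2 / 2) / 2) ^ 18 := by gcongr
    _ ≤ ∏ k, 2 * (1 / 4) * gaussianPDFReal 0 1 (|c * w k| + 1 / 4) :=
        exp_div_two_pow_le_prod_gaussianPDFReal (le_max_right _ _)
          (sum_sq_sum_rows_eq_one hvar hcov)
    _ ≤ stdGauss3.real (univ.pi fun k => Icc (c * w k - 1 / 4) (c * w k + 1 / 4)) :=
        prod_le_measureReal_pi_gaussianReal_pi_Icc _ (by norm_num)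
    _ ≤ _ := measureReal_mono hbox

lemma le_stdGauss3_forall_gt {A : Matrix (Fin 3) (Fin 3) ℝ} (hvar : ∀ i, ∑ k, A i k ^ 2 = 1)
    (hcov : ∀ i, ∑ k, A i k * A (i + 1) k = -1 / 3) {t : Fin 3 → ℝ} {ε : ℝ} (hε0 : 0 ≤ ε)
    (hε1 : ε ≤ 1) (h : ∀ i, ε / 2 ≤ stdGauss3.real {ω | t i ≤ ∑ k, A i k * ω k}ᶜ) :
    (ε / 2) ^ 18 ≤ stdGauss3.real {ω | ∀ i, ∑ k, A i k * ω k < t i} := by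
  have hneg i : ε / 2 ≤ stdGauss3.real {ω | -t i ≤ ∑ k, (-A) i k * ω k} :=
    (h i).trans (measureReal_mono fun ω hω => by simp at hω ⊢; linarith)
  convert le_stdGauss3_forall_lt (A := -A) (by simpa using hvar) (by simpa using hcov) hε0 hε1 hneg
    using 4 with ω
  simp

/-- Gaussian Arrow theorem for threshold functions: let `N₁,N₂,N₃` be standard
Gaussians with pairwise correlations `E[N_i N_{i+1}] = -1/3` (realized as linear images
`N i = Σ_k A i k · ω k` of a standard Gaussian vector `ω`, where the rows of `A` have
unit norm and consecutive inner products `-1/3`), and let `g_i = sgn(· - t_i)`.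
If for all `i` and `u ∈ {±1}`, `P[g_i(N_i) = u, g_{i+1}(N_{i+1}) = -u] ≤ 1 - ε`,
then `P[g₁(N₁) = g₂(N₂) = g₃(N₃)] ≥ (ε/2)^18`. -/
theorem stmt_13 (A : Matrix (Fin 3) (Fin 3) ℝ)
    (hvar : ∀ i : Fin 3, ∑ k, A i k ^ 2 = 1)
    (hcov : ∀ i : Fin 3, ∑ k, A i k * A (i + 1) k = -1/3)
    (t : Fin 3 → ℝ) (ε : ℝ) (hε0 : 0 < ε) (hε1 : ε ≤ 1)
    (hnd : ∀ (i : Fin 3) (u : ℝ), u = 1 ∨ u = -1 →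
      (stdGauss3 {ω | thresh (t i) (∑ k, A i k * ω k) = u ∧
          thresh (t (i + 1)) (∑ k, A (i + 1) k * ω k) = -u}).toReal ≤ 1 - ε) :
    (ε/2)^18 ≤ (stdGauss3 {ω |
        thresh (t 0) (∑ k, A 0 k * ω k) = thresh (t 1) (∑ k, A 1 k * ω k) ∧
        thresh (t 1) (∑ k, A 1 k * ω k) = thresh (t 2) (∑ k, A 2 k * ω k)}).toReal := by
  set E : Fin 3 → Set (Fin 3 → ℝ) := fun i => {ω | t i ≤ ∑ k, A i k * ω k}
  have hdiff : ∀ i j, stdGauss3.real (E j \ E i) ≤ 1 - ε := by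
    refine forall₂_fin_three_of_forall_add_one (fun i => by simpa using hε1) (fun i => ?_) (fun i => ?_)
    · have hset : E (i + 1) \ E i = {ω | thresh (t i) (∑ k, A i k * ω k) = -1 ∧
          thresh (t (i + 1)) (∑ k, A (i + 1) k * ω k) = - -1} := by
        ext ω; simp [E, thresh_eq_one_iff, thresh_eq_neg_one_iff, and_comm]
      rw [hset]; exact hnd i (-1) (Or.inr rfl)
    · have hset : E i \ E (i + 1) = {ω | thresh (t i) (∑ k, A i k * ω k) = 1 ∧
          thresh (t (i + 1)) (∑ k, A (i + 1) k * ω k) = -1} := by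
        ext ω; simp [E, thresh_eq_one_iff, thresh_eq_neg_one_iff]
      rw [hset]; exact hnd i 1 (Or.inl rfl)
  have hE i : MeasurableSet (E i) := measurableSet_le measurable_const (measurable_sum_mul _)
  rcases forall_le_measureReal_or_forall_le_measureReal_compl hE hdiff with hpos | hneg
  · refine (le_stdGauss3_forall_lt hvar hcov hε0.le hε1 hpos).trans (measureReal_mono ?_)
    intro ω hω
    simp only [mem_ofPred_eq, thresh_eq_one_iff.2 (hω _).le, and_self]
  · refine (le_stdGauss3_forall_gt hvar hcov hε0.le hε1 hneg).trans (measureReal_mono ?_)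
    intro ω hω
    simp only [mem_ofPred_eq, thresh_eq_neg_one_iff.2 (hω _), and_self]
end

section
/- Let F be a constitution on 3 alternatives and a single voter that satisfies IIA and Transitivity. Then exactly one of the following holds: (i) F is constant; (ii) there is an alternative c always ranked at the top or always at the bottom of the output, and on the other pair {a,b} the function f^{a>b}(x) equals x or -x; (iii) F(σ) = σ for all σ; (iv) F(σ) = -σ for all σ (where -σ is the reversal of σ). -/
/-- IIA for a transitive constitution of a single voter on 3 alternatives: the social
preference on each pair depends only on the voter's preference on that pair.
Rankings are permutations mapping alternatives to ranks (smaller rank = higher). -/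
def IIA1 (F : Equiv.Perm (Fin 3) → Equiv.Perm (Fin 3)) : Prop :=
  ∀ (a b : Fin 3) (σ σ' : Equiv.Perm (Fin 3)),
    ((σ a < σ b) ↔ (σ' a < σ' b)) → ((F σ a < F σ b) ↔ (F σ' a < F σ' b))

/-- (i) `F` is constant. -/
def IsConst1 (F : Equiv.Perm (Fin 3) → Equiv.Perm (Fin 3)) : Prop :=
  ∃ τ, ∀ σ, F σ = τ

/-- (ii) some alternative `c` is always ranked at the top (resp. bottom) of the output,
and on the remaining pair `{a,b}` the pairwise function is `x` or `-x`. -/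
def TopBottomCase1 (F : Equiv.Perm (Fin 3) → Equiv.Perm (Fin 3)) : Prop :=
  ∃ c : Fin 3, ((∀ σ, ∀ d, d ≠ c → F σ c < F σ d) ∨ (∀ σ, ∀ d, d ≠ c → F σ d < F σ c)) ∧
    ∀ a b : Fin 3, a ≠ b → a ≠ c → b ≠ c →
      ((∀ σ, (σ a < σ b ↔ F σ a < F σ b)) ∨ (∀ σ, (σ a < σ b ↔ F σ b < F σ a)))

/-- (iii) `F` is the identity dictator. -/
def IdCase1 (F : Equiv.Perm (Fin 3) → Equiv.Perm (Fin 3)) : Prop := ∀ σ, F σ = σ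

/-- (iv) `F` is the anti-dictator: `F σ = -σ`, the reversal of `σ`. -/
def RevCase1 (F : Equiv.Perm (Fin 3) → Equiv.Perm (Fin 3)) : Prop :=
  ∀ σ, F σ = σ.trans Fin.revPerm

/-- Pairwise consistency with the values `p` (on the identity input) and `q`
(on the reversed input): `ρ` is a valid output for input `σ` given `p`, `q`. -/
def predB (p q σ ρ : Equiv.Perm (Fin 3)) : Bool :=
  decide (∀ a b : Fin 3,
    ((σ a < σ b ↔ (1 : Equiv.Perm (Fin 3)) a < (1 : Equiv.Perm (Fin 3)) b) →
      (ρ a < ρ b ↔ p a < p b)) ∧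
    ((σ a < σ b ↔ Equiv.swap (0 : Fin 3) 2 a < Equiv.swap (0 : Fin 3) 2 b) →
      (ρ a < ρ b ↔ q a < q b)))

/-- All six permutations of `Fin 3`. -/
def perms3 : List (Equiv.Perm (Fin 3)) :=
  [1, Equiv.swap 0 1, Equiv.swap 0 2, Equiv.swap 1 2,
   Equiv.swap 0 1 * Equiv.swap 1 2, Equiv.swap 0 1 * Equiv.swap 0 2]

/-- The canonical output determined by `p`, `q`, and the input `σ`. -/
def K (p q σ : Equiv.Perm (Fin 3)) : Equiv.Perm (Fin 3) :=
  ((perms3.filter (fun ρ => predB p q σ ρ)).headD 1)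

set_option maxRecDepth 1000000 in
set_option maxHeartbeats 4000000 in
theorem key_pred_unique :
    ∀ p q σ ρ : Equiv.Perm (Fin 3), predB p q σ ρ = true → ρ = K p q σ := by decide

set_option maxRecDepth 1000000 in
set_option maxHeartbeats 8000000 in
set_option synthInstance.maxSize 5000 in
set_option synthInstance.maxHeartbeats 2000000 in
theorem final_classification :
    ∀ p q : Equiv.Perm (Fin 3), (∀ σ, predB p q σ (K p q σ) = true) →
    (IsConst1 (fun σ => K p q σ) ∨ TopBottomCase1 (fun σ => K p q σ) ∨
      IdCase1 (fun σ => K p q σ) ∨ RevCase1 (fun σ => K p q σ)) ∧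
    ¬ (IsConst1 (fun σ => K p q σ) ∧ TopBottomCase1 (fun σ => K p q σ)) ∧
    ¬ (IsConst1 (fun σ => K p q σ) ∧ IdCase1 (fun σ => K p q σ)) ∧
    ¬ (IsConst1 (fun σ => K p q σ) ∧ RevCase1 (fun σ => K p q σ)) ∧
    ¬ (TopBottomCase1 (fun σ => K p q σ) ∧ IdCase1 (fun σ => K p q σ)) ∧
    ¬ (TopBottomCase1 (fun σ => K p q σ) ∧ RevCase1 (fun σ => K p q σ)) ∧
    ¬ (IdCase1 (fun σ => K p q σ) ∧ RevCase1 (fun σ => K p q σ)) := by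
  unfold IsConst1 TopBottomCase1 IdCase1 RevCase1
  beta_reduce
  decide

/-- Characterization of single-voter transitive IIA constitutions on 3 alternatives:
exactly one of the four cases (constant; fixed top/bottom alternative with `±x` on the
remaining pair; dictator; anti-dictator) holds. -/
theorem stmt_14 (F : Equiv.Perm (Fin 3) → Equiv.Perm (Fin 3)) (hIIA : IIA1 F) :
    (IsConst1 F ∨ TopBottomCase1 F ∨ IdCase1 F ∨ RevCase1 F) ∧
    ¬ (IsConst1 F ∧ TopBottomCase1 F) ∧ ¬ (IsConst1 F ∧ IdCase1 F) ∧
    ¬ (IsConst1 F ∧ RevCase1 F) ∧ ¬ (TopBottomCase1 F ∧ IdCase1 F) ∧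
    ¬ (TopBottomCase1 F ∧ RevCase1 F) ∧ ¬ (IdCase1 F ∧ RevCase1 F) := by
  have hpredF : ∀ σ, predB (F 1) (F (Equiv.swap 0 2)) σ (F σ) = true := by
    intro σ
    simp only [predB, decide_eq_true_eq]
    intro a b
    exact ⟨fun h => hIIA a b σ 1 h, fun h => hIIA a b σ (Equiv.swap 0 2) h⟩
  have main : ∀ p q, (∀ σ, predB p q σ (F σ) = true) →
      (IsConst1 F ∨ TopBottomCase1 F ∨ IdCase1 F ∨ RevCase1 F) ∧
      ¬ (IsConst1 F ∧ TopBottomCase1 F) ∧ ¬ (IsConst1 F ∧ IdCase1 F) ∧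
      ¬ (IsConst1 F ∧ RevCase1 F) ∧ ¬ (TopBottomCase1 F ∧ IdCase1 F) ∧
      ¬ (TopBottomCase1 F ∧ RevCase1 F) ∧ ¬ (IdCase1 F ∧ RevCase1 F) := by
    intro p q hpred
    have hF : ∀ σ, F σ = K p q σ := fun σ => key_pred_unique p q σ (F σ) (hpred σ)
    have hFun : F = fun σ => K p q σ := funext hF
    rw [hFun]
    refine final_classification p q (fun σ => ?_)
    rw [← hF σ]; exact hpred σ
  exact main (F 1) (F (Equiv.swap 0 2)) hpredF
end

section
/- (Arrow's theorem with Non-Degeneracy, 3 alternatives) Any constitution F on 3 alternatives and n voters satisfying IIA, Transitivity, and Non-Degeneracy (no alternative is ranked at the top of the social outcome for all profiles, nor at the bottom for all profiles) is a dictator: there is a voter i such that F(σ) = σ(i) for all profiles σ, or F(σ) = -σ(i) for all σ. -/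
/-- IIA for a transitive constitution on 3 alternatives and `n` voters: the social
preference on each pair of alternatives depends only on the individual preferences on
that pair.  Profiles and outcomes are rankings: permutations mapping alternatives to
ranks (smaller rank = higher). -/
def IIA3 (n : ℕ) (F : (Fin n → Equiv.Perm (Fin 3)) → Equiv.Perm (Fin 3)) : Prop :=
  ∀ (a b : Fin 3) (σ σ' : Fin n → Equiv.Perm (Fin 3)),
    (∀ i, (σ i a < σ i b ↔ σ' i a < σ' i b)) → (F σ a < F σ b ↔ F σ' a < F σ' b)

/-- Non-Degeneracy: no alternative is ranked at the top of the social outcome for all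
profiles, nor at the bottom for all profiles. -/
def NonDegenerate3 (n : ℕ) (F : (Fin n → Equiv.Perm (Fin 3)) → Equiv.Perm (Fin 3)) : Prop :=
  ¬ ∃ c : Fin 3, (∀ σ, ∀ d, d ≠ c → F σ c < F σ d) ∨ (∀ σ, ∀ d, d ≠ c → F σ d < F σ c)

def arrowTri (p q r : Bool) : Equiv.Perm (Fin 3) :=
  match p, q, r with
  | true, true, _ => 1
  | true, false, false => Equiv.swap 1 2
  | true, false, true => Equiv.swap 0 1 * Equiv.swap 1 2
  | false, true, false => Equiv.swap 0 1
  | false, true, true => Equiv.swap 1 2 * Equiv.swap 0 1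
  | false, false, _ => Equiv.swap 0 2

lemma arrowTri_spec : ∀ p q r : Bool, ¬(p = q ∧ q = r) →
    decide (arrowTri p q r 0 < arrowTri p q r 1) = p ∧
    decide (arrowTri p q r 1 < arrowTri p q r 2) = q ∧
    decide (arrowTri p q r 2 < arrowTri p q r 0) = r := by decide

lemma perm3_notAllEq : ∀ π : Equiv.Perm (Fin 3),
    ¬(decide (π 0 < π 1) = decide (π 1 < π 2) ∧
      decide (π 1 < π 2) = decide (π 2 < π 0)) := by decide

lemma perm3_flip : ∀ (π : Equiv.Perm (Fin 3)) (a b : Fin 3), a ≠ b →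
    ¬(π a < π b) → π b < π a := by decide

lemma perm3_not_lt : ∀ (π : Equiv.Perm (Fin 3)) (a b : Fin 3), a ≠ b →
    (¬(π a < π b) ↔ π b < π a) := by decide

lemma perm3_eq_of_pairs : ∀ π ρ : Equiv.Perm (Fin 3),
    (π 0 < π 1 ↔ ρ 0 < ρ 1) → (π 1 < π 2 ↔ ρ 1 < ρ 2) → (π 2 < π 0 ↔ ρ 2 < ρ 0) →
    π = ρ := by decide

lemma perm3_eq_rev_of_pairs : ∀ π ρ : Equiv.Perm (Fin 3),
    (π 0 < π 1 ↔ ρ 1 < ρ 0) → (π 1 < π 2 ↔ ρ 2 < ρ 1) → (π 2 < π 0 ↔ ρ 0 < ρ 2) →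
    π = ρ.trans Fin.revPerm := by decide


lemma bool_rot : ∀ a b c : Bool, ¬(a = b ∧ b = c) → ¬(b = c ∧ c = a) := by decide
lemma bool_ne : ∀ a b : Bool, ¬ a = b → a = !b := by decide
lemma bool_inf : ∀ a b : Bool, a ⊓ b = (a && b) := by decide
lemma bool_sup : ∀ a b : Bool, a ⊔ b = (a || b) := by decide
lemma bool_nae_inf : ∀ a b : Bool, ¬(a = b ∧ b = !(a && b)) := by decide
lemma bool_nae_sup : ∀ a b : Bool, ¬(a = b ∧ b = !(a || b)) := by decide
lemma bool_sqz : ∀ a b : Bool, a ≤ b → a ≠ b → (!b) = a := by decide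

section NAE
variable {n : ℕ}

lemma nae_const {f g h : (Fin n → Bool) → Bool}
    (H : ∀ x y z, (∀ i, ¬(x i = y i ∧ y i = z i)) → ¬(f x = g y ∧ g y = h z))
    {c : Bool} (hc : ∀ x, f x = c) :
    (∀ y, g y = !c) ∨ (∀ z, h z = !c) := by
  by_cases hg : ∀ y, g y = !c
  · exact Or.inl hg
  · push_neg at hg
    obtain ⟨y0, hy0⟩ := hg
    have hy0c : g y0 = c := by have := bool_ne _ _ hy0; simpa using this
    refine Or.inr fun z => ?_
    have hnae : ∀ i, ¬((if y0 i = z i then !(y0 i) else true) = y0 i ∧ y0 i = z i) := by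
      intro i ⟨h1, h2⟩
      rw [if_pos h2] at h1
      exact absurd h1 (by cases y0 i <;> simp)
    have hH := H (fun i => if y0 i = z i then !(y0 i) else true) y0 z hnae
    rw [hc, hy0c] at hH
    have hzc : ¬ h z = c := fun e => hH ⟨rfl, e.symm⟩
    exact bool_ne _ _ hzc

lemma nae_classify {f g h : (Fin n → Bool) → Bool}
    (H : ∀ x y z, (∀ i, ¬(x i = y i ∧ y i = z i)) → ¬(f x = g y ∧ g y = h z))
    (hf1 : ∃ x, f x = true) (hf0 : ∃ x, f x = false)
    (hg1 : ∃ x, g x = true) (hg0 : ∃ x, g x = false)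
    (hh1 : ∃ x, h x = true) (hh0 : ∃ x, h x = false) :
    ∃ i : Fin n,
      ((∀ x, f x = x i) ∧ (∀ x, g x = x i) ∧ (∀ x, h x = x i)) ∨
      ((∀ x, f x = !(x i)) ∧ (∀ x, g x = !(x i)) ∧ (∀ x, h x = !(x i))) := by
  classical
  have hattain : ∀ (k : (Fin n → Bool) → Bool), (∃ x, k x = true) → (∃ x, k x = false) →
      ∀ c : Bool, ∃ x, k x = c := by
    rintro k k1 k0 (_|_) <;> assumption
  -- R1 : g y = !(f (!y)), using nonconstancy of h
  have R1 : ∀ y, g y = !(f (fun i => !(y i))) := by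
    intro y
    have hnae : ∀ z : Fin n → Bool, ∀ i,
        ¬((fun i => !(y i)) i = y i ∧ y i = z i) := by
      intro z i ⟨h1, _⟩
      simp at h1
    refine bool_ne _ _ fun e => ?_
    obtain ⟨z0, hz0⟩ := hattain h hh1 hh0 (g y)
    exact H _ y z0 (hnae z0) ⟨e.symm, hz0.symm⟩
  -- R2 : h z = !(g (!z)), using nonconstancy of f
  have R2 : ∀ z, h z = !(g (fun i => !(z i))) := by
    intro z
    have hnae : ∀ x : Fin n → Bool, ∀ i,
        ¬(x i = !(z i) ∧ (fun i => !(z i)) i = z i) := by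
      intro x i ⟨_, h2⟩
      simp at h2
    refine bool_ne _ _ fun e => ?_
    obtain ⟨x0, hx0⟩ := hattain f hf1 hf0 (g (fun i => !(z i)))
    exact H x0 _ z (hnae x0) ⟨hx0, e.symm⟩
  -- R3 : f x = !(h (!x)), using nonconstancy of g
  have R3 : ∀ x, f x = !(h (fun i => !(x i))) := by
    intro x
    have hnae : ∀ y : Fin n → Bool, ∀ i,
        ¬(x i = y i ∧ y i = !(x i)) := by
      intro y i ⟨h1, h2⟩
      rw [h1] at h2
      simp at h2
    refine bool_ne _ _ fun e => ?_
    obtain ⟨y0, hy0⟩ := hattain g hg1 hg0 (f x)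
    exact H x y0 _ (hnae y0) ⟨hy0.symm, hy0.trans e⟩
  have hfg : ∀ x, f x = g x := by
    intro x
    rw [R3 x, R2 (fun i => !(x i))]
    simp
  have sd : ∀ y, f y = !(f (fun i => !(y i))) := fun y => (hfg y).trans ((R1 y).trans rfl)
  have hhf : ∀ z, h z = f z := by
    intro z
    rw [R2 z, ← hfg (fun i => !(z i)), ← sd z]
  -- reduce H to a statement about f only
  have Hf : ∀ x y z, (∀ i, ¬(x i = y i ∧ y i = z i)) → ¬(f x = f y ∧ f y = f z) := by
    intro x y z hn ⟨e1, e2⟩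
    exact H x y z hn ⟨e1.trans (hfg y), (hfg y).symm.trans (e2.trans (hhf z).symm)⟩
  -- closure under pointwise && and ||
  have hinf : ∀ x y, f x = true → f y = true → f (fun i => x i && y i) = true := by
    intro x y hx hy
    have hn : ∀ i, ¬(x i = y i ∧ y i = (fun i => !(x i && y i)) i) := fun i =>
      bool_nae_inf (x i) (y i)
    have := Hf x y _ hn
    rw [hx, hy] at this
    have hz : f (fun i => !(x i && y i)) = false := by
      cases hfz : f (fun i => !(x i && y i))
      · rfl
      · exact absurd ⟨rfl, hfz.symm⟩ this
    have := sd (fun i => x i && y i)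
    rw [show (fun i => !((fun i => x i && y i) i)) = (fun i => !(x i && y i)) from rfl, hz] at this
    simpa using this
  have hsup : ∀ x y, f x = true → f y = true → f (fun i => x i || y i) = true := by
    intro x y hx hy
    have hn : ∀ i, ¬(x i = y i ∧ y i = (fun i => !(x i || y i)) i) := fun i =>
      bool_nae_sup (x i) (y i)
    have := Hf x y _ hn
    rw [hx, hy] at this
    have hz : f (fun i => !(x i || y i)) = false := by
      cases hfz : f (fun i => !(x i || y i))
      · rfl
      · exact absurd ⟨rfl, hfz.symm⟩ this
    have := sd (fun i => x i || y i)
    rw [show (fun i => !((fun i => x i || y i) i)) = (fun i => !(x i || y i)) from rfl, hz] at this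
    simpa using this
  -- the set of accepted profiles, its min and max
  let U : Finset (Fin n → Bool) := Finset.univ.filter fun x => f x = true
  have hmemU : ∀ x, x ∈ U ↔ f x = true := by
    intro x; simp [U]
  obtain ⟨w, hw⟩ := hf1
  have hUne : U.Nonempty := ⟨w, (hmemU w).2 hw⟩
  set m := U.inf' hUne id with hm
  set M := U.sup' hUne id with hM
  have hinf' : ∀ a b : Fin n → Bool, f a = true → f b = true → f (a ⊓ b) = true := by
    intro a b ha hb
    have : a ⊓ b = fun i => a i && b i := funext fun i => bool_inf (a i) (b i)
    rw [this]; exact hinf a b ha hb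
  have hsup' : ∀ a b : Fin n → Bool, f a = true → f b = true → f (a ⊔ b) = true := by
    intro a b ha hb
    have : a ⊔ b = fun i => a i || b i := funext fun i => bool_sup (a i) (b i)
    rw [this]; exact hsup a b ha hb
  have hfm : f m = true :=
    Finset.inf'_induction (p := fun a => f a = true) hUne id
      (fun a ha b hb => hinf' a b ha hb) (fun b hb => (hmemU b).1 hb)
  have hfM : f M = true :=
    Finset.sup'_induction (p := fun a => f a = true) hUne id
      (fun a ha b hb => hsup' a b ha hb) (fun b hb => (hmemU b).1 hb)
  have hmle : ∀ x, f x = true → m ≤ x := fun x hx => Finset.inf'_le id ((hmemU x).2 hx)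
  have hleM : ∀ x, f x = true → x ≤ M := fun x hx => Finset.le_sup' id ((hmemU x).2 hx)
  have hnotf : ∀ x, f x = false → f (fun i => !(x i)) = true := by
    intro x hx
    have := sd x
    rw [hx] at this
    simpa using this.symm
  -- there is a coordinate where m and M agree
  have hex : ∃ i, m i = M i := by
    by_contra hno
    push_neg at hno
    have hmM : m ≤ M := hleM m hfm
    have hMm : (fun i => !(M i)) = m := funext fun i => bool_sqz (m i) (M i) (hmM i) (hno i)
    have := sd M
    rw [hMm, hfm, hfM] at this
    simp at this
  obtain ⟨i, hi⟩ := hex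
  have dir1 : ∀ x, f x = true → x i = m i := by
    intro x hx
    have h1 : m i ≤ x i := hmle x hx i
    have h2 : x i ≤ m i := hi ▸ hleM x hx i
    exact le_antisymm h2 h1
  have dir2 : ∀ x, x i = m i → f x = true := by
    intro x hx
    cases hfx : f x with
    | true => rfl
    | false =>
      have h2 := dir1 _ (hnotf x hfx)
      simp only [hx] at h2
      exact absurd h2 (by cases m i <;> simp)
  have key : ∀ x : Fin n → Bool, f x = (if m i = true then x i else !(x i)) := by
    intro x
    by_cases hb : m i = true
    · rw [if_pos hb]
      cases hxi : x i
      · cases hfx : f x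
        · rfl
        · have h3 := (dir1 x hfx).trans hb
          rw [hxi] at h3
          exact absurd h3 (by simp)
      · exact dir2 x (hxi.trans hb.symm)
    · rw [if_neg hb]
      have hb' : m i = false := by cases hmi : m i; rfl; exact absurd hmi hb
      cases hxi : x i
      · rw [dir2 x (hxi.trans hb'.symm)]; rfl
      · cases hfx : f x
        · rfl
        · have h3 := (dir1 x hfx).trans hb'
          rw [hxi] at h3
          exact absurd h3 (by simp)
  refine ⟨i, ?_⟩
  by_cases hb : m i = true
  · left
    have hfd : ∀ x, f x = x i := fun x => by rw [key x, if_pos hb]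
    exact ⟨hfd, fun x => (hfg x).symm.trans (hfd x), fun x => (hhf x).trans (hfd x)⟩
  · right
    have hfd : ∀ x, f x = !(x i) := fun x => by rw [key x, if_neg hb]
    exact ⟨hfd, fun x => (hfg x).symm.trans (hfd x), fun x => (hhf x).trans (hfd x)⟩

end NAE

lemma fin3_resolve : ∀ (p d q r : Fin 3), d ≠ p → p ≠ q → p ≠ r → q ≠ r →
    d = q ∨ d = r := by decide

def arrowProf (n : ℕ) (u v : Equiv.Perm (Fin 3)) (x : Fin n → Bool) :
    Fin n → Equiv.Perm (Fin 3) := fun i => if x i then u else v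

def arrowG (n : ℕ) (F : (Fin n → Equiv.Perm (Fin 3)) → Equiv.Perm (Fin 3))
    (a b : Fin 3) (u v : Equiv.Perm (Fin 3)) : (Fin n → Bool) → Bool :=
  fun x => decide (F (arrowProf n u v x) a < F (arrowProf n u v x) b)

lemma arrowG_spec {n : ℕ} {F : (Fin n → Equiv.Perm (Fin 3)) → Equiv.Perm (Fin 3)}
    (hIIA : IIA3 n F) (a b : Fin 3) (u v : Equiv.Perm (Fin 3))
    (hu : u a < u b) (hv : v b < v a) (σ : Fin n → Equiv.Perm (Fin 3)) :
    arrowG n F a b u v (fun i => decide (σ i a < σ i b)) = decide (F σ a < F σ b) := by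
  have key : F σ a < F σ b ↔
      F (arrowProf n u v (fun i => decide (σ i a < σ i b))) a <
      F (arrowProf n u v (fun i => decide (σ i a < σ i b))) b := by
    apply hIIA a b σ _
    intro i
    unfold arrowProf
    by_cases hc : σ i a < σ i b
    · rw [if_pos (decide_eq_true hc)]
      exact iff_of_true hc hu
    · rw [if_neg (by simpa using hc)]
      exact iff_of_false hc (asymm hv)
  exact (decide_eq_decide.mpr key).symm

/-- Arrow's theorem with Non-Degeneracy for 3 alternatives: any constitution
satisfying IIA, Transitivity (encoded by the ranking-valued codomain) and
Non-Degeneracy is a dictator or an anti-dictator on some voter. -/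
theorem stmt_15 (n : ℕ) (F : (Fin n → Equiv.Perm (Fin 3)) → Equiv.Perm (Fin 3))
    (hIIA : IIA3 n F) (hND : NonDegenerate3 n F) :
    ∃ i : Fin n, (∀ σ, F σ = σ i) ∨ (∀ σ, F σ = (σ i).trans Fin.revPerm) := by
  classical
  set f := arrowG n F 0 1 1 (Equiv.swap 0 1) with hfdef
  set g := arrowG n F 1 2 1 (Equiv.swap 1 2) with hgdef
  set h := arrowG n F 2 0 (Equiv.swap 0 2) 1 with hhdef
  have fspec : ∀ σ, f (fun i => decide (σ i 0 < σ i 1)) = decide (F σ 0 < F σ 1) :=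
    fun σ => arrowG_spec hIIA 0 1 1 (Equiv.swap 0 1) (by decide) (by decide) σ
  have gspec : ∀ σ, g (fun i => decide (σ i 1 < σ i 2)) = decide (F σ 1 < F σ 2) :=
    fun σ => arrowG_spec hIIA 1 2 1 (Equiv.swap 1 2) (by decide) (by decide) σ
  have hspec : ∀ σ, h (fun i => decide (σ i 2 < σ i 0)) = decide (F σ 2 < F σ 0) :=
    fun σ => arrowG_spec hIIA 2 0 (Equiv.swap 0 2) 1 (by decide) (by decide) σ
  have H : ∀ x y z : Fin n → Bool, (∀ i, ¬(x i = y i ∧ y i = z i)) →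
      ¬(f x = g y ∧ g y = h z) := by
    intro x y z hnae hc
    set σ : Fin n → Equiv.Perm (Fin 3) := fun i => arrowTri (x i) (y i) (z i) with hσ
    have e1 : (fun i => decide (σ i 0 < σ i 1)) = x :=
      funext fun i => (arrowTri_spec _ _ _ (hnae i)).1
    have e2 : (fun i => decide (σ i 1 < σ i 2)) = y :=
      funext fun i => (arrowTri_spec _ _ _ (hnae i)).2.1
    have e3 : (fun i => decide (σ i 2 < σ i 0)) = z :=
      funext fun i => (arrowTri_spec _ _ _ (hnae i)).2.2
    have q1 : f x = decide (F σ 0 < F σ 1) := by rw [← e1]; exact fspec σ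
    have q2 : g y = decide (F σ 1 < F σ 2) := by rw [← e2]; exact gspec σ
    have q3 : h z = decide (F σ 2 < F σ 0) := by rw [← e3]; exact hspec σ
    exact perm3_notAllEq (F σ)
      ⟨by rw [← q1, ← q2]; exact hc.1, by rw [← q2, ← q3]; exact hc.2⟩
  have P01 : (∀ x, f x = true) → ∀ σ, F σ 0 < F σ 1 := fun hc σ =>
    of_decide_eq_true ((fspec σ).symm.trans (hc _))
  have P10 : (∀ x, f x = false) → ∀ σ, F σ 1 < F σ 0 := fun hc σ =>
    perm3_flip (F σ) 0 1 (by decide) (of_decide_eq_false ((fspec σ).symm.trans (hc _)))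
  have P12 : (∀ x, g x = true) → ∀ σ, F σ 1 < F σ 2 := fun hc σ =>
    of_decide_eq_true ((gspec σ).symm.trans (hc _))
  have P21 : (∀ x, g x = false) → ∀ σ, F σ 2 < F σ 1 := fun hc σ =>
    perm3_flip (F σ) 1 2 (by decide) (of_decide_eq_false ((gspec σ).symm.trans (hc _)))
  have P20 : (∀ x, h x = true) → ∀ σ, F σ 2 < F σ 0 := fun hc σ =>
    of_decide_eq_true ((hspec σ).symm.trans (hc _))
  have P02 : (∀ x, h x = false) → ∀ σ, F σ 0 < F σ 2 := fun hc σ =>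
    perm3_flip (F σ) 2 0 (by decide) (of_decide_eq_false ((hspec σ).symm.trans (hc _)))
  have topC : ∀ p q r : Fin 3, p ≠ q → p ≠ r → q ≠ r →
      (∀ σ, F σ p < F σ q) → (∀ σ, F σ p < F σ r) → False := by
    intro p q r h1 h2 h3 hq hr
    refine hND ⟨p, Or.inl fun σ d hd => ?_⟩
    rcases fin3_resolve p d q r hd h1 h2 h3 with e | e
    · rw [e]; exact hq σ
    · rw [e]; exact hr σ
  have botC : ∀ p q r : Fin 3, p ≠ q → p ≠ r → q ≠ r →
      (∀ σ, F σ q < F σ p) → (∀ σ, F σ r < F σ p) → False := by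
    intro p q r h1 h2 h3 hq hr
    refine hND ⟨p, Or.inr fun σ d hd => ?_⟩
    rcases fin3_resolve p d q r hd h1 h2 h3 with e | e
    · rw [e]; exact hq σ
    · rw [e]; exact hr σ
  have H2 : ∀ y z x : Fin n → Bool, (∀ i, ¬(y i = z i ∧ z i = x i)) →
      ¬(g y = h z ∧ h z = f x) :=
    fun y z x hn => bool_rot _ _ _ (H x y z fun i => bool_rot _ _ _ (bool_rot _ _ _ (hn i)))
  have H3 : ∀ z x y : Fin n → Bool, (∀ i, ¬(z i = x i ∧ x i = y i)) →
      ¬(h z = f x ∧ f x = g y) :=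
    fun z x y hn => bool_rot _ _ _ (bool_rot _ _ _ (H x y z fun i => bool_rot _ _ _ (hn i)))
  have constOf : ∀ k : (Fin n → Bool) → Bool,
      ¬((∃ x, k x = true) ∧ (∃ x, k x = false)) →
      (∀ x, k x = true) ∨ (∀ x, k x = false) := by
    intro k hk
    rcases not_and_or.mp hk with hk | hk
    · right
      intro x
      cases hx : k x
      · rfl
      · exact absurd ⟨x, hx⟩ hk
    · left
      intro x
      cases hx : k x
      · exact absurd ⟨x, hx⟩ hk
      · rfl
  by_cases hfc : (∃ x, f x = true) ∧ (∃ x, f x = false)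
  · by_cases hgc : (∃ x, g x = true) ∧ (∃ x, g x = false)
    · by_cases hhc : (∃ x, h x = true) ∧ (∃ x, h x = false)
      · -- all three nonconstant: classification
        obtain ⟨i, hcase⟩ := nae_classify H hfc.1 hfc.2 hgc.1 hgc.2 hhc.1 hhc.2
        refine ⟨i, ?_⟩
        rcases hcase with ⟨hf, hg, hh⟩ | ⟨hf, hg, hh⟩
        · left
          intro σ
          have e1 : decide (F σ 0 < F σ 1) = decide (σ i 0 < σ i 1) :=
            (fspec σ).symm.trans (hf (fun j => decide (σ j 0 < σ j 1)))
          have e2 : decide (F σ 1 < F σ 2) = decide (σ i 1 < σ i 2) :=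
            (gspec σ).symm.trans (hg (fun j => decide (σ j 1 < σ j 2)))
          have e3 : decide (F σ 2 < F σ 0) = decide (σ i 2 < σ i 0) :=
            (hspec σ).symm.trans (hh (fun j => decide (σ j 2 < σ j 0)))
          exact perm3_eq_of_pairs (F σ) (σ i)
            (decide_eq_decide.mp e1) (decide_eq_decide.mp e2) (decide_eq_decide.mp e3)
        · right
          intro σ
          have e1 : decide (F σ 0 < F σ 1) = !(decide (σ i 0 < σ i 1)) :=
            (fspec σ).symm.trans (hf (fun j => decide (σ j 0 < σ j 1)))
          have e2 : decide (F σ 1 < F σ 2) = !(decide (σ i 1 < σ i 2)) :=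
            (gspec σ).symm.trans (hg (fun j => decide (σ j 1 < σ j 2)))
          have e3 : decide (F σ 2 < F σ 0) = !(decide (σ i 2 < σ i 0)) :=
            (hspec σ).symm.trans (hh (fun j => decide (σ j 2 < σ j 0)))
          rw [← decide_not] at e1 e2 e3
          exact perm3_eq_rev_of_pairs (F σ) (σ i)
            ((decide_eq_decide.mp e1).trans (perm3_not_lt (σ i) 0 1 (by decide)))
            ((decide_eq_decide.mp e2).trans (perm3_not_lt (σ i) 1 2 (by decide)))
            ((decide_eq_decide.mp e3).trans (perm3_not_lt (σ i) 2 0 (by decide)))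
      · -- h constant
        rcases constOf h hhc with hh | hh
        · rcases nae_const H3 hh with hf' | hg'
          · have hf'' : ∀ x, f x = false := fun x => by simpa using hf' x
            exact ((botC 0 2 1 (by decide) (by decide) (by decide) (P20 hh) (P10 hf''))).elim
          · have hg'' : ∀ x, g x = false := fun x => by simpa using hg' x
            exact ((topC 2 0 1 (by decide) (by decide) (by decide) (P20 hh) (P21 hg''))).elim
        · rcases nae_const H3 hh with hf' | hg'
          · have hf'' : ∀ x, f x = true := fun x => by simpa using hf' x
            exact ((topC 0 2 1 (by decide) (by decide) (by decide) (P02 hh) (P01 hf''))).elim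
          · have hg'' : ∀ x, g x = true := fun x => by simpa using hg' x
            exact ((botC 2 0 1 (by decide) (by decide) (by decide) (P02 hh) (P12 hg''))).elim
    · -- g constant
      rcases constOf g hgc with hg | hg
      · rcases nae_const H2 hg with hh' | hf'
        · have hh'' : ∀ x, h x = false := fun x => by simpa using hh' x
          exact ((botC 2 1 0 (by decide) (by decide) (by decide) (P12 hg) (P02 hh''))).elim
        · have hf'' : ∀ x, f x = false := fun x => by simpa using hf' x
          exact ((topC 1 2 0 (by decide) (by decide) (by decide) (P12 hg) (P10 hf''))).elim
      · rcases nae_const H2 hg with hh' | hf'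
        · have hh'' : ∀ x, h x = true := fun x => by simpa using hh' x
          exact ((topC 2 1 0 (by decide) (by decide) (by decide) (P21 hg) (P20 hh''))).elim
        · have hf'' : ∀ x, f x = true := fun x => by simpa using hf' x
          exact ((botC 1 2 0 (by decide) (by decide) (by decide) (P21 hg) (P01 hf''))).elim
  · -- f constant
    rcases constOf f hfc with hf | hf
    · rcases nae_const H hf with hg' | hh'
      · have hg'' : ∀ x, g x = false := fun x => by simpa using hg' x
        exact ((botC 1 0 2 (by decide) (by decide) (by decide) (P01 hf) (P21 hg''))).elim
      · have hh'' : ∀ x, h x = false := fun x => by simpa using hh' x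
        exact ((topC 0 1 2 (by decide) (by decide) (by decide) (P01 hf) (P02 hh''))).elim
    · rcases nae_const H hf with hg' | hh'
      · have hg'' : ∀ x, g x = true := fun x => by simpa using hg' x
        exact ((topC 1 0 2 (by decide) (by decide) (by decide) (P10 hf) (P12 hg''))).elim
      · have hh'' : ∀ x, h x = true := fun x => by simpa using hh' x
        exact ((botC 0 1 2 (by decide) (by decide) (by decide) (P10 hf) (P20 hh''))).elim
end

section
/- Let F be a transitive constitution satisfying IIA, let A be a set of at least 3 alternatives such that F restricted to A is a dictator on voter i (F_A(σ) = σ(i)|_A for all σ), and let b ∉ A be an alternative with b ∼ A (i.e., there exist a, a' ∈ A and profiles σ, σ' such that F(σ) ranks b above a and F(σ') ranks a' above b). Then F restricted to A ∪ {b} is a dictator on voter i. -/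
/-- IIA for a constitution on `k` alternatives given by pairwise social preferences. -/
def IIAk (n k : ℕ) (F : (Fin n → Equiv.Perm (Fin k)) → Fin k → Fin k → Prop) : Prop :=
  ∀ (a b : Fin k) (σ σ' : Fin n → Equiv.Perm (Fin k)),
    (∀ i, (σ i a < σ i b ↔ σ' i a < σ' i b)) → (F σ a b ↔ F σ' a b)

/-- Transitivity of the social outcome. -/
def Transk (n k : ℕ) (F : (Fin n → Equiv.Perm (Fin k)) → Fin k → Fin k → Prop) : Prop :=
  ∀ σ (a b c : Fin k), a ≠ b → b ≠ c → a ≠ c → F σ a b → F σ b c → F σ a c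


/-- Any three distinct elements of `Fin k` can be placed in any prescribed relative
order by some permutation. -/
lemma exists_perm_triple {k : ℕ} (x y z : Fin k) (hxy : x ≠ y) (hxz : x ≠ z)
    (hyz : y ≠ z) : ∃ π : Equiv.Perm (Fin k), π x < π y ∧ π y < π z := by
  have hk : 3 ≤ k := by
    have h1 := x.isLt; have h2 := y.isLt; have h3 := z.isLt
    have e1 : (x : ℕ) ≠ y := Fin.val_ne_of_ne hxy
    have e2 : (x : ℕ) ≠ z := Fin.val_ne_of_ne hxz
    have e3 : (y : ℕ) ≠ z := Fin.val_ne_of_ne hyz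
    omega
  set e0 : Fin k := ⟨0, by omega⟩ with he0
  set e1 : Fin k := ⟨1, by omega⟩ with he1
  set e2 : Fin k := ⟨2, by omega⟩ with he2
  have ne01 : e0 ≠ e1 := by simp [he0, he1, Fin.ext_iff]
  have ne02 : e0 ≠ e2 := by simp [he0, he2, Fin.ext_iff]
  have ne12 : e1 ≠ e2 := by simp [he1, he2, Fin.ext_iff]
  set π₁ : Equiv.Perm (Fin k) := Equiv.swap x e0 with hπ₁
  have hx1 : π₁ x = e0 := Equiv.swap_apply_left x e0
  have hy1 : π₁ y ≠ e0 := by rw [← hx1]; exact fun h => hxy (π₁.injective h).symm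
  have hz1 : π₁ z ≠ e0 := by rw [← hx1]; exact fun h => hxz (π₁.injective h).symm
  set π₂ : Equiv.Perm (Fin k) := Equiv.swap (π₁ y) e1 with hπ₂
  have hy2 : π₂ (π₁ y) = e1 := Equiv.swap_apply_left _ _
  have h02 : π₂ e0 = e0 := Equiv.swap_apply_of_ne_of_ne (Ne.symm hy1) ne01
  have hz2 : π₂ (π₁ z) ≠ e0 := by
    rw [← h02]; exact fun h => hz1 (π₂.injective h)
  have hz2' : π₂ (π₁ z) ≠ e1 := by
    rw [← hy2]; exact fun h => hyz (π₁.injective (π₂.injective h)).symm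
  set π₃ : Equiv.Perm (Fin k) := Equiv.swap (π₂ (π₁ z)) e2 with hπ₃
  have hz3 : π₃ (π₂ (π₁ z)) = e2 := Equiv.swap_apply_left _ _
  have h03 : π₃ e0 = e0 := Equiv.swap_apply_of_ne_of_ne (Ne.symm hz2) ne02
  have h13 : π₃ e1 = e1 := Equiv.swap_apply_of_ne_of_ne (Ne.symm hz2') ne12
  refine ⟨(π₁.trans π₂).trans π₃, ?_, ?_⟩
  · show π₃ (π₂ (π₁ x)) < π₃ (π₂ (π₁ y))
    rw [hx1, h02, h03, hy2, h13]
    exact Fin.mk_lt_mk.mpr (by omega)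
  · show π₃ (π₂ (π₁ y)) < π₃ (π₂ (π₁ z))
    rw [hy2, h13, hz3]
    exact Fin.mk_lt_mk.mpr (by omega)

/-- Step lemma (upward): if some profile `τ` ranks `b` above `a'` socially while voter `i`
also prefers `b` to `a'`, and `i` dictates the pair `(a', a)`, then `i` dictates
`b` above `a` in the forward direction. -/
lemma step_up {n k : ℕ} {F : (Fin n → Equiv.Perm (Fin k)) → Fin k → Fin k → Prop}
    (hIIA : IIAk n k F) (htrans : Transk n k F) {i : Fin n}
    {a a' b : Fin k} (hba : b ≠ a) (hba' : b ≠ a') (haa' : a' ≠ a)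
    (hd : ∀ σ, σ i a' < σ i a → F σ a' a)
    {τ : Fin n → Equiv.Perm (Fin k)} (hτ : F τ b a') (hτi : τ i b < τ i a')
    (σ : Fin n → Equiv.Perm (Fin k)) (hσi : σ i b < σ i a) : F σ b a := by
  have hch : ∀ j : Fin n, ∃ π : Equiv.Perm (Fin k),
      ((π b < π a) ↔ (σ j b < σ j a)) ∧ ((π b < π a') ↔ (τ j b < τ j a')) ∧
      (σ j b < σ j a → τ j b < τ j a' → π a' < π a) := by
    intro j
    by_cases h1 : σ j b < σ j a <;> by_cases h2 : τ j b < τ j a'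
    · obtain ⟨π, hp1, hp2⟩ := exists_perm_triple b a' a hba' hba haa'
      exact ⟨π, iff_of_true (hp1.trans hp2) h1, iff_of_true hp1 h2, fun _ _ => hp2⟩
    · obtain ⟨π, hp1, hp2⟩ := exists_perm_triple a' b a (Ne.symm hba') haa' hba
      exact ⟨π, iff_of_true hp2 h1, iff_of_false (lt_asymm hp1) h2,
        fun _ h => absurd h h2⟩
    · obtain ⟨π, hp1, hp2⟩ := exists_perm_triple a b a' (Ne.symm hba) (Ne.symm haa') hba'
      exact ⟨π, iff_of_false (lt_asymm hp1) h1, iff_of_true hp2 h2,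
        fun h _ => absurd h h1⟩
    · obtain ⟨π, hp1, hp2⟩ := exists_perm_triple a' a b haa' hba'.symm hba.symm
      exact ⟨π, iff_of_false (lt_asymm hp2) h1,
        iff_of_false (lt_asymm (hp1.trans hp2)) h2, fun h _ => absurd h h1⟩
  choose σ' hc1 hc2 hc3 using hch
  have h1 : F σ' b a' := (hIIA b a' σ' τ fun j => hc2 j).mpr hτ
  have h2 : F σ' a' a := hd σ' (hc3 i hσi hτi)
  have h3 : F σ' b a := htrans σ' b a' a hba' haa' hba h1 h2
  exact (hIIA b a σ σ' fun j => (hc1 j).symm).mpr h3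

/-- Step lemma (downward): mirror of `step_up`. -/
lemma step_down {n k : ℕ} {F : (Fin n → Equiv.Perm (Fin k)) → Fin k → Fin k → Prop}
    (hIIA : IIAk n k F) (htrans : Transk n k F) {i : Fin n}
    {a a' b : Fin k} (hba : b ≠ a) (hba' : b ≠ a') (haa' : a' ≠ a)
    (hd : ∀ σ, σ i a < σ i a' → F σ a a')
    {τ : Fin n → Equiv.Perm (Fin k)} (hτ : F τ a' b) (hτi : τ i a' < τ i b)
    (σ : Fin n → Equiv.Perm (Fin k)) (hσi : σ i a < σ i b) : F σ a b := by
  have hch : ∀ j : Fin n, ∃ π : Equiv.Perm (Fin k),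
      ((π a < π b) ↔ (σ j a < σ j b)) ∧ ((π a' < π b) ↔ (τ j a' < τ j b)) ∧
      (σ j a < σ j b → τ j a' < τ j b → π a < π a') := by
    intro j
    by_cases h1 : σ j a < σ j b <;> by_cases h2 : τ j a' < τ j b
    · obtain ⟨π, hp1, hp2⟩ := exists_perm_triple a a' b (Ne.symm haa') (Ne.symm hba) (Ne.symm hba')
      exact ⟨π, iff_of_true (hp1.trans hp2) h1, iff_of_true hp2 h2, fun _ _ => hp1⟩
    · obtain ⟨π, hp1, hp2⟩ := exists_perm_triple a b a' (Ne.symm hba) (Ne.symm haa') hba'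
      exact ⟨π, iff_of_true hp1 h1, iff_of_false (lt_asymm hp2) h2,
        fun _ h => absurd h h2⟩
    · obtain ⟨π, hp1, hp2⟩ := exists_perm_triple a' b a (Ne.symm hba') haa' hba
      exact ⟨π, iff_of_false (lt_asymm hp2) h1, iff_of_true hp1 h2,
        fun h _ => absurd h h1⟩
    · obtain ⟨π, hp1, hp2⟩ := exists_perm_triple b a a' hba hba' (Ne.symm haa')
      exact ⟨π, iff_of_false (lt_asymm hp1) h1,
        iff_of_false (lt_asymm (hp1.trans hp2)) h2, fun h _ => absurd h h1⟩
  choose σ' hc1 hc2 hc3 using hch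
  have h1 : F σ' a' b := (hIIA a' b σ' τ fun j => hc2 j).mpr hτ
  have h2 : F σ' a a' := hd σ' (hc3 i hσi hτi)
  have h3 : F σ' a b := htrans σ' a a' b (Ne.symm haa') hba'.symm hba.symm h2 h1
  exact (hIIA a b σ σ' fun j => (hc1 j).symm).mpr h3

/-- From any witness `F σ₁ b a₁` we can manufacture a witness at a different
alternative `a₃` on which voter `i` agrees. -/
lemma crux_up {n k : ℕ} {F : (Fin n → Equiv.Perm (Fin k)) → Fin k → Fin k → Prop}
    (hIIA : IIAk n k F) (htrans : Transk n k F) {i : Fin n}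
    {a₁ a₃ b : Fin k} (hba₁ : b ≠ a₁) (hba₃ : b ≠ a₃) (h13 : a₁ ≠ a₃)
    (hd : ∀ σ, σ i a₁ < σ i a₃ → F σ a₁ a₃)
    {σ₁ : Fin n → Equiv.Perm (Fin k)} (hσ₁ : F σ₁ b a₁) :
    ∃ τ, F τ b a₃ ∧ τ i b < τ i a₃ := by
  have hch : ∀ j : Fin n, ∃ π : Equiv.Perm (Fin k),
      ((π b < π a₁) ↔ (σ₁ j b < σ₁ j a₁)) ∧ π b < π a₃ ∧ π a₁ < π a₃ := by
    intro j
    by_cases h1 : σ₁ j b < σ₁ j a₁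
    · obtain ⟨π, hp1, hp2⟩ := exists_perm_triple b a₁ a₃ hba₁ hba₃ h13
      exact ⟨π, iff_of_true hp1 h1, hp1.trans hp2, hp2⟩
    · obtain ⟨π, hp1, hp2⟩ := exists_perm_triple a₁ b a₃ (Ne.symm hba₁) h13 hba₃
      exact ⟨π, iff_of_false (lt_asymm hp1) h1, hp2, hp1.trans hp2⟩
  choose σ' hc1 hc2 hc3 using hch
  have h1 : F σ' b a₁ := (hIIA b a₁ σ' σ₁ fun j => hc1 j).mpr hσ₁
  have h2 : F σ' a₁ a₃ := hd σ' (hc3 i)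
  exact ⟨σ', htrans σ' b a₁ a₃ hba₁ h13 hba₃ h1 h2, hc2 i⟩

/-- Mirror of `crux_up`. -/
lemma crux_down {n k : ℕ} {F : (Fin n → Equiv.Perm (Fin k)) → Fin k → Fin k → Prop}
    (hIIA : IIAk n k F) (htrans : Transk n k F) {i : Fin n}
    {a₂ a₃ b : Fin k} (hba₂ : b ≠ a₂) (hba₃ : b ≠ a₃) (h23 : a₂ ≠ a₃)
    (hd : ∀ σ, σ i a₃ < σ i a₂ → F σ a₃ a₂)
    {σ₂ : Fin n → Equiv.Perm (Fin k)} (hσ₂ : F σ₂ a₂ b) :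
    ∃ τ, F τ a₃ b ∧ τ i a₃ < τ i b := by
  have hch : ∀ j : Fin n, ∃ π : Equiv.Perm (Fin k),
      ((π a₂ < π b) ↔ (σ₂ j a₂ < σ₂ j b)) ∧ π a₃ < π b ∧ π a₃ < π a₂ := by
    intro j
    by_cases h1 : σ₂ j a₂ < σ₂ j b
    · obtain ⟨π, hp1, hp2⟩ := exists_perm_triple a₃ a₂ b (Ne.symm h23) (Ne.symm hba₃) (Ne.symm hba₂)
      exact ⟨π, iff_of_true hp2 h1, hp1.trans hp2, hp1⟩
    · obtain ⟨π, hp1, hp2⟩ := exists_perm_triple a₃ b a₂ (Ne.symm hba₃) (Ne.symm h23) hba₂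
      exact ⟨π, iff_of_false (lt_asymm hp2) h1, hp1, hp1.trans hp2⟩
  choose σ' hc1 hc2 hc3 using hch
  have h1 : F σ' a₂ b := (hIIA a₂ b σ' σ₂ fun j => hc1 j).mpr hσ₂
  have h2 : F σ' a₃ a₂ := hd σ' (hc3 i)
  exact ⟨σ', htrans σ' a₃ a₂ b (Ne.symm h23) hba₂.symm hba₃.symm h2 h1, hc2 i⟩

/-- If a transitive IIA constitution restricted to a set `A` of at least 3 alternatives
is a dictator on voter `i`, and `b ∉ A` satisfies `b ∼ A` (some profile ranks `b` above
some element of `A`, and some profile ranks some element of `A` above `b`), then the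
restriction to `A ∪ {b}` is also a dictator on voter `i`. -/
theorem stmt_17 (n k : ℕ)
    (F : (Fin n → Equiv.Perm (Fin k)) → Fin k → Fin k → Prop)
    (hcomplete : ∀ σ (a b : Fin k), a ≠ b → (F σ a b ↔ ¬ F σ b a))
    (hIIA : IIAk n k F) (htrans : Transk n k F)
    (A : Finset (Fin k)) (hA : 3 ≤ A.card) (i : Fin n)
    (hdict : ∀ σ, ∀ a ∈ A, ∀ a' ∈ A, a ≠ a' → (F σ a a' ↔ σ i a < σ i a'))
    (b : Fin k) (hb : b ∉ A)
    (hsim : (∃ a ∈ A, ∃ σ, F σ b a) ∧ (∃ a' ∈ A, ∃ σ', F σ' a' b)) :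
    ∀ σ, ∀ p ∈ insert b A, ∀ q ∈ insert b A, p ≠ q → (F σ p q ↔ σ i p < σ i q) := by
  obtain ⟨⟨a₁, ha₁, σ₁, hσ₁⟩, ⟨a₂, ha₂, σ₂, hσ₂⟩⟩ := hsim
  have hbne : ∀ a ∈ A, b ≠ a := fun a ha h => hb (h ▸ ha)
  have hpick : ∀ x y : Fin k, ∃ a₃ ∈ A, a₃ ≠ x ∧ a₃ ≠ y := by
    intro x y
    have h1 : A.card - 1 ≤ (A.erase x).card := Finset.pred_card_le_card_erase
    have h2 : (A.erase x).card - 1 ≤ ((A.erase x).erase y).card :=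
      Finset.pred_card_le_card_erase
    have h3 : 0 < ((A.erase x).erase y).card := by omega
    obtain ⟨a₃, ha₃⟩ := Finset.card_pos.mp h3
    rw [Finset.mem_erase, Finset.mem_erase] at ha₃
    exact ⟨a₃, ha₃.2.2, ha₃.2.1, ha₃.1⟩
  have P1 : ∀ a ∈ A, ∀ σ, σ i b < σ i a → F σ b a := by
    intro a ha σ hlt
    obtain ⟨a₃, ha₃, h31, h3a⟩ := hpick a₁ a
    have hd13 : ∀ σ, σ i a₁ < σ i a₃ → F σ a₁ a₃ :=
      fun σ h => (hdict σ a₁ ha₁ a₃ ha₃ (Ne.symm h31)).mpr h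
    obtain ⟨τ, hτ, hτi⟩ := crux_up hIIA htrans (hbne a₁ ha₁) (hbne a₃ ha₃)
      (Ne.symm h31) hd13 hσ₁
    have hd3a : ∀ σ, σ i a₃ < σ i a → F σ a₃ a :=
      fun σ h => (hdict σ a₃ ha₃ a ha h3a).mpr h
    exact step_up hIIA htrans (hbne a ha) (hbne a₃ ha₃) h3a hd3a hτ hτi σ hlt
  have P2 : ∀ a ∈ A, ∀ σ, σ i a < σ i b → F σ a b := by
    intro a ha σ hlt
    obtain ⟨a₃, ha₃, h32, h3a⟩ := hpick a₂ a
    have hd32 : ∀ σ, σ i a₃ < σ i a₂ → F σ a₃ a₂ :=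
      fun σ h => (hdict σ a₃ ha₃ a₂ ha₂ h32).mpr h
    obtain ⟨τ, hτ, hτi⟩ := crux_down hIIA htrans (hbne a₂ ha₂) (hbne a₃ ha₃)
      (Ne.symm h32) hd32 hσ₂
    have hda3 : ∀ σ, σ i a < σ i a₃ → F σ a a₃ :=
      fun σ h => (hdict σ a ha a₃ ha₃ (Ne.symm h3a)).mpr h
    exact step_down hIIA htrans (hbne a ha) (hbne a₃ ha₃) h3a hda3 hτ hτi σ hlt
  intro σ p hp q hq hpq
  have hne : ∀ x y : Fin k, x ≠ y → ¬ σ i x < σ i y → σ i y < σ i x := by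
    intro x y hxy h
    rcases lt_or_gt_of_ne ((σ i).injective.ne hxy) with h' | h'
    · exact absurd h' h
    · exact h'
  rcases Finset.mem_insert.mp hp with rfl | hpA
  · rcases Finset.mem_insert.mp hq with rfl | hqA
    · exact absurd rfl hpq
    · constructor
      · intro hF
        by_contra h
        exact (hcomplete σ q p (Ne.symm (hbne q hqA))).mp
          (P2 q hqA σ (hne p q (hbne q hqA) h)) hF
      · exact P1 q hqA σ
  · rcases Finset.mem_insert.mp hq with rfl | hqA
    · constructor
      · intro hF
        by_contra h
        exact (hcomplete σ q p (hbne p hpA)).mp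
          (P1 p hpA σ (hne p q (Ne.symm (hbne p hpA)) h)) hF
      · exact P2 p hpA σ
    · exact hdict σ p hpA q hqA hpq
end
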